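/- arXiv:2301.12483 — 3 statements merged into one kernel-verified Lean document; each statement's English description precedes it below -/
import Mathlib

section
/- Let f: ℝ^n → ℝ^n be continuously differentiable with forward-complete flow ξ(t,x). Then for all x, x̄ ∈ ℝ^n and t ≥ 0, |ξ(t,x̄) − ξ(t,x)| ≤ exp( max_{v ∈ [x, x̄]} ∫_0^t μ(J f(ξ(s,v))) ds ) · |x̄ − x|, where [x, x̄] is the line segment between x and x̄, J f is the Jacobian of f, and μ the matrix measure associated to any induced norm. -/
open Filter Topology

noncomputable def inducedNorm {n : ℕ} (ν : (Fin n → ℝ) → ℝ)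
    (A : Matrix (Fin n) (Fin n) ℝ) : ℝ :=
  sSup ((fun v => ν (A.mulVec v)) '' {v | ν v = 1})

def IsNormOn {E : Type*} [AddCommGroup E] [Module ℝ E] (ν : E → ℝ) : Prop :=
  (∀ v, 0 ≤ ν v) ∧ (∀ v, ν v = 0 ↔ v = 0) ∧
    (∀ (c : ℝ) v, ν (c • v) = |c| * ν v) ∧ ∀ v w, ν (v + w) ≤ ν v + ν w

def IsMatrixMeasure {n : ℕ} (ν : (Fin n → ℝ) → ℝ)
    (A : Matrix (Fin n) (Fin n) ℝ) (m : ℝ) : Prop :=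
  Tendsto (fun t : ℝ => (inducedNorm ν (1 + t • A) - 1) / t)
    (nhdsWithin 0 (Set.Ioi 0)) (nhds m)

/-!
For initial states `p, q`, the difference `η = ξ(·, q) - ξ(·, p)` solves the linear
equation `η' = A s *ᵥ η`, where `A s` is the average of `Jf` over the segment from `ξ(s, p)`
to `ξ(s, q)`. By the defining limit of the matrix measure, `s ↦ |η s| exp (-∫₀ˢ m)` is
nonincreasing as soon as `μ (A s) ≤ m s`, a Grönwall estimate. The flow is continuous in the
initial state and `Jf` is uniformly continuous on compact sets, so `A s` is uniformly close to
`Jf (ξ(s, p))` when `q` is close to `p` on `[x, x̄]`. Chopping `[x, x̄]` into short pieces and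
telescoping gives the bound up to a factor `exp (ε t)`, and `ε → 0` finishes.
-/

open Set
open scoped Matrix

-- Any matrix norm would do: it only enters through constants and continuity.
attribute [local instance] Matrix.linftyOpNormedAddCommGroup Matrix.linftyOpNormedSpace

lemma inducedNorm_le {n : ℕ} {ν : (Fin n → ℝ) → ℝ} {M : Matrix (Fin n) (Fin n) ℝ} {c : ℝ}
    (hc : 0 ≤ c) (h : ∀ v, ν (M *ᵥ v) ≤ c * ν v) : inducedNorm ν M ≤ c := by
  refine Real.sSup_le ?_ hc
  rintro _ ⟨v, hv : ν v = 1, rfl⟩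
  simpa [hv] using h v

namespace IsNormOn

section Module

variable {E : Type*} [AddCommGroup E] [Module ℝ E] {ν : E → ℝ}

lemma nonneg (hν : IsNormOn ν) (v : E) : 0 ≤ ν v := hν.1 v

lemma eq_zero_iff (hν : IsNormOn ν) {v : E} : ν v = 0 ↔ v = 0 := hν.2.1 v

lemma map_smul (hν : IsNormOn ν) (c : ℝ) (v : E) : ν (c • v) = |c| * ν v := hν.2.2.1 c v

lemma add_le (hν : IsNormOn ν) (v w : E) : ν (v + w) ≤ ν v + ν w := hν.2.2.2 v w

lemma map_zero (hν : IsNormOn ν) : ν 0 = 0 := hν.eq_zero_iff.2 rfl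

lemma sub_le (hν : IsNormOn ν) (v w : E) : ν v - ν w ≤ ν (v - w) := by
  have := hν.add_le w (v - w)
  rw [add_sub_cancel] at this
  linarith

lemma sum_le (hν : IsNormOn ν) {ι : Type*} (s : Finset ι) (g : ι → E) :
    ν (∑ i ∈ s, g i) ≤ ∑ i ∈ s, ν (g i) := by
  classical
  induction s using Finset.induction with
  | empty => simp [hν.map_zero]
  | insert i s hi ih =>
    rw [Finset.sum_insert hi, Finset.sum_insert hi]
    exact (hν.add_le _ _).trans (add_le_add_right ih _)

end Module

variable {n : ℕ} {ν : (Fin n → ℝ) → ℝ}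

lemma exists_le_mul_norm (hν : IsNormOn ν) : ∃ C ≥ 0, ∀ v, ν v ≤ C * ‖v‖ := by
  refine ⟨∑ i, ν (Pi.single i 1), Finset.sum_nonneg fun i _ => hν.nonneg _, fun v => ?_⟩
  calc ν v = ν (∑ i, v i • Pi.single i 1) := by rw [← pi_eq_sum_univ' v]
    _ ≤ ∑ i, ν (v i • Pi.single i 1) := hν.sum_le _ _
    _ = ∑ i, |v i| * ν (Pi.single i 1) := by simp_rw [hν.map_smul]
    _ ≤ ∑ i, ‖v‖ * ν (Pi.single i 1) := by
        gcongr with i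
        · exact hν.nonneg _
        · exact norm_le_pi_norm v i
    _ = (∑ i, ν (Pi.single i 1)) * ‖v‖ := by rw [Finset.sum_mul]; simp only [mul_comm]

lemma continuous (hν : IsNormOn ν) : Continuous ν := by
  obtain ⟨C, hC0, hC⟩ := hν.exists_le_mul_norm
  refine (LipschitzWith.of_le_add_mul C.toNNReal fun v w => ?_).continuous
  rw [Real.coe_toNNReal _ hC0, dist_eq_norm]
  linarith [(hν.sub_le v w).trans (hC (v - w))]

lemma exists_pos_mul_norm_le (hν : IsNormOn ν) : ∃ c > 0, ∀ v, c * ‖v‖ ≤ ν v := by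
  have hunit : ∀ v ≠ 0, ‖v‖⁻¹ • v ∈ Metric.sphere (0 : Fin n → ℝ) 1 := fun v hv => by
    simp [norm_smul, hv]
  rcases (Metric.sphere (0 : Fin n → ℝ) 1).eq_empty_or_nonempty with hS | hS
  · refine ⟨1, one_pos, fun v => ?_⟩
    obtain rfl : v = 0 := by_contra fun hv => hS.subset (hunit v hv)
    simp [hν.map_zero]
  obtain ⟨u, hu, hmin⟩ := (isCompact_sphere (0 : Fin n → ℝ) 1).exists_isMinOn hS
    hν.continuous.continuousOn
  have hu0 : u ≠ 0 := ne_zero_of_mem_unit_sphere (E := Fin n → ℝ) ⟨u, hu⟩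
  refine ⟨ν u, (hν.nonneg u).lt_of_ne (Ne.symm (mt hν.eq_zero_iff.1 hu0)), fun v => ?_⟩
  rcases eq_or_ne v 0 with rfl | hv
  · simp [hν.map_zero]
  have : ν u ≤ ν (‖v‖⁻¹ • v) := hmin (hunit v hv)
  rw [hν.map_smul, abs_inv, abs_norm] at this
  rwa [← le_inv_mul_iff₀' (norm_pos_iff.2 hv)]

lemma exists_mulVec_le (hν : IsNormOn ν) :
    ∃ C ≥ 0, ∀ (M : Matrix (Fin n) (Fin n) ℝ) v, ν (M *ᵥ v) ≤ C * ‖M‖ * ν v := by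
  obtain ⟨C, hC0, hC⟩ := hν.exists_le_mul_norm
  obtain ⟨c, hc0, hc⟩ := hν.exists_pos_mul_norm_le
  refine ⟨C / c, by positivity, fun M v => ?_⟩
  calc ν (M *ᵥ v) ≤ C * (‖M‖ * ‖v‖) := (hC _).trans (by gcongr; exact M.linfty_opNorm_mulVec v)
    _ ≤ C * (‖M‖ * (ν v / c)) := by gcongr; rw [le_div_iff₀' hc0]; exact hc v
    _ = C / c * ‖M‖ * ν v := by ring

lemma bddAbove_inducedNorm_image (hν : IsNormOn ν) (M : Matrix (Fin n) (Fin n) ℝ) :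
    BddAbove ((fun v => ν (M *ᵥ v)) '' {v | ν v = 1}) := by
  obtain ⟨C, -, hC⟩ := hν.exists_mulVec_le
  refine ⟨C * ‖M‖, ?_⟩
  rintro _ ⟨v, hv : ν v = 1, rfl⟩
  simpa [hv] using hC M v

lemma inducedNorm_nonneg (hν : IsNormOn ν) (M : Matrix (Fin n) (Fin n) ℝ) :
    0 ≤ inducedNorm ν M :=
  Real.sSup_nonneg fun _ ⟨_, _, hv⟩ => hv ▸ hν.nonneg _

lemma le_inducedNorm_mul (hν : IsNormOn ν) (M : Matrix (Fin n) (Fin n) ℝ) (v : Fin n → ℝ) :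
    ν (M *ᵥ v) ≤ inducedNorm ν M * ν v := by
  rcases (hν.nonneg v).eq_or_lt with hv | hv
  · rw [← hv, hν.eq_zero_iff.1 hv.symm]
    simp [hν.map_zero]
  have hunit : ν ((ν v)⁻¹ • v) = 1 := by
    rw [hν.map_smul, abs_inv, abs_of_pos hv, inv_mul_cancel₀ hv.ne']
  have : ν (M *ᵥ ((ν v)⁻¹ • v)) ≤ inducedNorm ν M :=
    le_csSup (hν.bddAbove_inducedNorm_image M) ⟨_, hunit, rfl⟩
  rw [Matrix.mulVec_smul, hν.map_smul, abs_inv, abs_of_pos hv, inv_mul_le_iff₀ hv] at this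
  rwa [mul_comm]

lemma inducedNorm_one [NeZero n] (hν : IsNormOn ν) : inducedNorm ν 1 = 1 := by
  set e : Fin n → ℝ := Pi.single 0 1
  have he : 0 < ν e := (hν.nonneg e).lt_of_ne' (mt hν.eq_zero_iff.1 (by simp [e]))
  have hunit : ν ((ν e)⁻¹ • e) = 1 := by
    rw [hν.map_smul, abs_inv, abs_of_pos he, inv_mul_cancel₀ he.ne']
  refine le_antisymm (inducedNorm_le zero_le_one fun v => by simp) ?_
  simpa [hunit] using hν.le_inducedNorm_mul 1 ((ν e)⁻¹ • e)

lemma inducedNorm_le_mul_norm (hν : IsNormOn ν) :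
    ∃ C ≥ 0, ∀ M : Matrix (Fin n) (Fin n) ℝ, inducedNorm ν M ≤ C * ‖M‖ := by
  obtain ⟨C, hC0, hC⟩ := hν.exists_mulVec_le
  exact ⟨C, hC0, fun M => inducedNorm_le (by positivity) (hC M)⟩

end IsNormOn

namespace IsMatrixMeasure

variable {n : ℕ} {ν : (Fin n → ℝ) → ℝ}

lemma le_add_inducedNorm_sub (hν : IsNormOn ν) {M N : Matrix (Fin n) (Fin n) ℝ} {a b : ℝ}
    (hM : IsMatrixMeasure ν M a) (hN : IsMatrixMeasure ν N b) :
    a ≤ b + inducedNorm ν (M - N) := by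
  refine le_of_tendsto_of_tendsto hM (hN.add_const _) ?_
  filter_upwards [self_mem_nhdsWithin] with h (hh : 0 < h)
  have : inducedNorm ν (1 + h • M) ≤ inducedNorm ν (1 + h • N) + h * inducedNorm ν (M - N) := by
    refine inducedNorm_le (add_nonneg (hν.inducedNorm_nonneg _)
      (mul_nonneg hh.le (hν.inducedNorm_nonneg _))) fun v => ?_
    have hsplit : (1 + h • M) *ᵥ v = (1 + h • N) *ᵥ v + h • ((M - N) *ᵥ v) := by
      simp only [Matrix.add_mulVec, Matrix.smul_mulVec, Matrix.sub_mulVec, smul_sub]; abel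
    rw [hsplit]
    refine (hν.add_le _ _).trans ?_
    rw [hν.map_smul, abs_of_pos hh, add_mul, mul_assoc]
    gcongr
    · exact hν.le_inducedNorm_mul _ v
    · exact hν.le_inducedNorm_mul _ v
  rw [div_add' _ _ _ hh.ne', div_le_div_iff_of_pos_right hh]
  linarith

lemma hasDerivWithinAt [NeZero n] (hν : IsNormOn ν) {M : Matrix (Fin n) (Fin n) ℝ} {a : ℝ}
    (hM : IsMatrixMeasure ν M a) :
    HasDerivWithinAt (fun h : ℝ => inducedNorm ν (1 + h • M)) a (Ioi 0) 0 := by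
  rw [hasDerivWithinAt_iff_tendsto_slope' self_notMem_Ioi]
  refine hM.congr fun h => ?_
  simp [slope_def_field, hν.inducedNorm_one]

end IsMatrixMeasure

lemma lipschitzWith_of_isMatrixMeasure {n : ℕ} {ν : (Fin n → ℝ) → ℝ} (hν : IsNormOn ν)
    {μ : Matrix (Fin n) (Fin n) ℝ → ℝ} (hμ : ∀ M, IsMatrixMeasure ν M (μ M)) :
    ∃ K, LipschitzWith K μ := by
  obtain ⟨C, hC0, hC⟩ := hν.inducedNorm_le_mul_norm
  refine ⟨C.toNNReal, LipschitzWith.of_le_add_mul _ fun M N => ?_⟩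
  rw [Real.coe_toNNReal _ hC0, dist_eq_norm]
  exact ((hμ M).le_add_inducedNorm_sub hν (hμ N)).trans (by gcongr; exact hC _)

lemma frequently_slope_lt_of_le_of_hasDerivWithinAt {g Φ : ℝ → ℝ} {x Φ' r : ℝ}
    (hle : ∀ z, g z ≤ Φ z) (hx : g x = Φ x) (hΦ : HasDerivWithinAt Φ Φ' (Ioi x) x)
    (hr : Φ' < r) : ∃ᶠ z in 𝓝[>] x, slope g x z < r := by
  rw [hasDerivWithinAt_iff_tendsto_slope' self_notMem_Ioi] at hΦ
  refine Eventually.frequently ?_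
  filter_upwards [hΦ.eventually_lt_const hr, self_mem_nhdsWithin] with z hz (hxz : x < z)
  refine lt_of_le_of_lt ?_ hz
  rw [slope_def_field, slope_def_field, hx]
  exact div_le_div_of_nonneg_right (sub_le_sub_right (hle z) _) (sub_pos.2 hxz).le

namespace IsMatrixMeasure

variable {n : ℕ} {ν : (Fin n → ℝ) → ℝ}

lemma exists_majorant_hasDerivWithinAt [NeZero n] (hν : IsNormOn ν)
    {A : Matrix (Fin n) (Fin n) ℝ} {a : ℝ} (hA : IsMatrixMeasure ν A a) {η : ℝ → Fin n → ℝ}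
    {x : ℝ} (hη : HasDerivAt η (A *ᵥ η x) x) :
    ∃ Φ : ℝ → ℝ, (∀ z, ν (η z) ≤ Φ z) ∧ Φ x = ν (η x) ∧
      HasDerivWithinAt Φ (a * ν (η x)) (Ioi x) x := by
  set R : ℝ → ℝ := fun z => ν (η z - η x - (z - x) • A *ᵥ η x)
  have hR : HasDerivAt R 0 x := by
    obtain ⟨C, -, hC⟩ := hν.exists_le_mul_norm
    rw [hasDerivAt_iff_isLittleO]
    refine (Asymptotics.IsBigO.of_bound C (Eventually.of_forall fun z => ?_)).trans_isLittleO
      (hasDerivAt_iff_isLittleO.1 hη)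
    simpa [R, Real.norm_eq_abs, abs_of_nonneg (hν.nonneg _), hν.map_zero] using hC _
  have hop : HasDerivWithinAt (fun z => inducedNorm ν (1 + (z - x) • A)) a (Ioi x) x := by
    have := (hA.hasDerivWithinAt hν).comp_of_eq x ((hasDerivWithinAt_id x (Ioi x)).sub_const x)
      (fun z (hz : x < z) => (sub_pos.2 hz : 0 < z - x)) (sub_self x).symm
    rwa [mul_one] at this
  refine ⟨fun z => inducedNorm ν (1 + (z - x) • A) * ν (η x) + R z, fun z => ?_, ?_, ?_⟩
  · have hsplit : η z = (1 + (z - x) • A) *ᵥ η x + (η z - η x - (z - x) • A *ᵥ η x) := by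
      simp only [Matrix.add_mulVec, Matrix.one_mulVec, Matrix.smul_mulVec]; abel
    calc ν (η z) ≤ ν ((1 + (z - x) • A) *ᵥ η x) + R z := hsplit ▸ hν.add_le _ _
      _ ≤ inducedNorm ν (1 + (z - x) • A) * ν (η x) + R z :=
          add_le_add_left (hν.le_inducedNorm_mul _ _) _
  · simp [R, hν.inducedNorm_one, hν.map_zero]
  · have := (hop.mul_const (ν (η x))).add hR.hasDerivWithinAt
    rwa [add_zero] at this

end IsMatrixMeasure

lemma IsNormOn.le_exp_integral_of_hasDerivAt_mulVec {n : ℕ} [NeZero n] {ν : (Fin n → ℝ) → ℝ}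
    (hν : IsNormOn ν) {μ : Matrix (Fin n) (Fin n) ℝ → ℝ} (hμ : ∀ M, IsMatrixMeasure ν M (μ M))
    {η : ℝ → Fin n → ℝ} {A : ℝ → Matrix (Fin n) (Fin n) ℝ} {m : ℝ → ℝ} {T : ℝ} (hT : 0 ≤ T)
    (hη : ∀ s, HasDerivAt η (A s *ᵥ η s) s) (hm : Continuous m)
    (hAm : ∀ s ∈ Icc 0 T, μ (A s) ≤ m s) :
    ν (η T) ≤ Real.exp (∫ s in (0:ℝ)..T, m s) * ν (η 0) := by
  set I : ℝ → ℝ := fun s => ∫ u in (0:ℝ)..s, m u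
  have hI : ∀ s, HasDerivAt I (m s) s := fun s =>
    hm.integral_hasStrictDerivAt 0 s |>.hasDerivAt
  have hηc : Continuous η := continuous_iff_continuousAt.2 fun s => (hη s).continuousAt
  -- `ν (η s) * exp (-I s)` is nonincreasing on `[0, T]`
  have key : ν (η T) * Real.exp (-I T) ≤ ν (η 0) * Real.exp (-I 0) := by
    have hνc := hν.continuous
    have hIc : Continuous I := continuous_iff_continuousAt.2 fun s => (hI s).continuousAt
    refine image_le_of_liminf_slope_right_le_deriv_boundary
      (f := fun s => ν (η s) * Real.exp (-I s)) (B := fun _ => ν (η 0) * Real.exp (-I 0)) (B' := 0)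
      (by fun_prop) le_rfl continuousOn_const (fun _ _ => hasDerivWithinAt_const _ _ _)
      (fun x hx r hr => ?_) ⟨hT, le_rfl⟩
    obtain ⟨Φ, hΦle, hΦx, hΦ⟩ := (hμ (A x)).exists_majorant_hasDerivWithinAt hν (hη x)
    have he := ((hI x).neg.exp).hasDerivWithinAt (s := Ioi x)
    refine frequently_slope_lt_of_le_of_hasDerivWithinAt
      (fun z => mul_le_mul_of_nonneg_right (hΦle z) (Real.exp_pos _).le) (by rw [hΦx])
      (hΦ.mul he) ?_
    have hnonpos : (μ (A x) - m x) * (ν (η x) * Real.exp (-I x)) ≤ 0 :=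
      mul_nonpos_of_nonpos_of_nonneg (sub_nonpos.2 (hAm x (Ico_subset_Icc_self hx)))
        (mul_nonneg (hν.nonneg _) (Real.exp_pos _).le)
    rw [hΦx, Pi.neg_apply]
    rw [Pi.zero_apply] at hr
    linarith
  have hI0 : I 0 = 0 := intervalIntegral.integral_same
  rw [hI0, neg_zero, Real.exp_zero, mul_one, Real.exp_neg, ← div_eq_mul_inv,
    div_le_iff₀ (Real.exp_pos _), mul_comm] at key
  exact key

section SegmentAverage

variable {n : ℕ}

noncomputable def segmentAverage (Jf : (Fin n → ℝ) → Matrix (Fin n) (Fin n) ℝ)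
    (p q : Fin n → ℝ) : Matrix (Fin n) (Fin n) ℝ :=
  ∫ r in (0:ℝ)..1, Jf (p + r • (q - p))

variable {Jf : (Fin n → ℝ) → Matrix (Fin n) (Fin n) ℝ}

lemma segmentAverage_mulVec {f : (Fin n → ℝ) → Fin n → ℝ}
    (hf : ∀ v, HasFDerivAt f (LinearMap.toContinuousLinearMap (Jf v).mulVecLin) v)
    (hJf : Continuous Jf) (p q : Fin n → ℝ) :
    segmentAverage Jf p q *ᵥ (q - p) = f q - f p := by
  set w := q - p
  have hline : Continuous fun r : ℝ => Jf (p + r • w) := by fun_prop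
  have hderiv : ∀ r : ℝ, HasDerivAt (fun r : ℝ => f (p + r • w)) (Jf (p + r • w) *ᵥ w) r :=
    fun r => by
      have hl : HasDerivAt (fun r : ℝ => p + r • w) w r := by
        simpa using ((hasDerivAt_id r).smul_const w).const_add p
      exact (hf _).comp_hasDerivAt r hl
  let L : Matrix (Fin n) (Fin n) ℝ →L[ℝ] (Fin n → ℝ) :=
    LinearMap.toContinuousLinearMap ((Matrix.mulVecBilin ℝ ℝ).flip w)
  calc segmentAverage Jf p q *ᵥ w = L (∫ r in (0:ℝ)..1, Jf (p + r • w)) := rfl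
    _ = ∫ r in (0:ℝ)..1, Jf (p + r • w) *ᵥ w :=
        (L.intervalIntegral_comp_comm (hline.intervalIntegrable 0 1)).symm
    _ = f q - f p := by
        rw [intervalIntegral.integral_eq_sub_of_hasDerivAt (fun r _ => hderiv r)
          ((L.continuous.comp hline).intervalIntegrable 0 1)]
        simp [w]

lemma norm_segmentAverage_sub_le (hJf : Continuous Jf) {p q : Fin n → ℝ}
    {B : Matrix (Fin n) (Fin n) ℝ} {ε : ℝ}
    (h : ∀ r ∈ Icc (0:ℝ) 1, ‖Jf (p + r • (q - p)) - B‖ ≤ ε) :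
    ‖segmentAverage Jf p q - B‖ ≤ ε := by
  have hline : Continuous fun r : ℝ => Jf (p + r • (q - p)) := by fun_prop
  have hsub : segmentAverage Jf p q - B = ∫ r in (0:ℝ)..1, (Jf (p + r • (q - p)) - B) := by
    rw [intervalIntegral.integral_sub (hline.intervalIntegrable 0 1)
      (continuous_const.intervalIntegrable 0 1)]
    simp [segmentAverage]
  rw [hsub]
  have := intervalIntegral.norm_integral_le_of_norm_le_const
    fun r hr => h r (Ioc_subset_Icc_self (by rwa [uIoc_of_le zero_le_one] at hr))
  rwa [sub_zero, abs_one, mul_one] at this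

end SegmentAverage

lemma ContinuousOn.forall_lt_of_forall_Ico_lt {u : ℝ → ℝ} {a b ρ : ℝ}
    (hu : ContinuousOn u (Icc a b)) (h : ∀ s ∈ Icc a b, (∀ w ∈ Ico a s, u w < ρ) → u s < ρ) :
    ∀ s ∈ Icc a b, u s < ρ := by
  by_contra! hbad
  set S := Icc a b ∩ u ⁻¹' Ici ρ
  have hS : IsClosed S := hu.preimage_isClosed_of_isClosed isClosed_Icc isClosed_Ici
  have hSne : S.Nonempty := let ⟨s, hs, hρ⟩ := hbad; ⟨s, hs, hρ⟩
  have hmem : sInf S ∈ S := hS.csInf_mem hSne ⟨a, fun s hs => hs.1.1⟩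
  refine not_le.2 (h _ hmem.1 fun w hw => ?_) hmem.2
  by_contra! hw'
  exact not_le.2 hw.2 (csInf_le ⟨a, fun s hs => hs.1.1⟩
    ⟨⟨hw.1, hw.2.le.trans hmem.1.2⟩, hw'⟩)

section FlowContinuity

variable {E : Type*} [NormedAddCommGroup E] [NormedSpace ℝ E] [ProperSpace E] {f : E → E}

lemma LocallyLipschitz.exists_forall_dist_lt_of_hasDerivAt (hf : LocallyLipschitz f)
    {γ : ℝ → E} (hγ : ∀ t, HasDerivAt γ (f (γ t)) t) (T : ℝ) {ρ : ℝ} (hρ : 0 < ρ) :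
    ∃ δ > 0, ∀ γ' : ℝ → E, (∀ t, HasDerivAt γ' (f (γ' t)) t) → dist (γ' 0) (γ 0) < δ →
      ∀ s ∈ Icc 0 T, dist (γ' s) (γ s) < ρ := by
  -- While `γ'` stays `ρ' ≤ 1`-close to `γ`, both lie in `B`, where `f` is Lipschitz; so the
  -- Grönwall estimate keeps them `ρ'`-close up to time `T`.
  set ρ' := min ρ 1
  set B := Metric.cthickening 1 (γ '' Icc 0 T)
  have hγc : Continuous γ := continuous_iff_continuousAt.2 fun t => (hγ t).continuousAt
  obtain ⟨K, hK⟩ := hf.locallyLipschitzOn.exists_lipschitzOnWith_of_compact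
    ((isCompact_Icc.image hγc).cthickening (r := 1))
  refine ⟨ρ' / Real.exp (K * T), by positivity, fun γ' hγ' h0 => ?_⟩
  have hγ'c : Continuous γ' := continuous_iff_continuousAt.2 fun t => (hγ' t).continuousAt
  refine fun s hs => (lt_of_lt_of_le ?_ (min_le_left ρ 1))
  refine ContinuousOn.forall_lt_of_forall_Ico_lt (u := fun s => dist (γ' s) (γ s))
    (by fun_prop) (fun s hs hclose => ?_) s hs
  have hγB : ∀ w ∈ Ico 0 s, γ w ∈ B := fun w hw =>
    Metric.self_subset_cthickening _ ⟨w, ⟨hw.1, hw.2.le.trans hs.2⟩, rfl⟩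
  have hγ'B : ∀ w ∈ Ico 0 s, γ' w ∈ B := fun w hw =>
    Metric.mem_cthickening_of_dist_le _ (γ w) 1 _ ⟨w, ⟨hw.1, hw.2.le.trans hs.2⟩, rfl⟩
      ((hclose w hw).le.trans (min_le_right ρ 1))
  have := dist_le_of_trajectories_ODE_of_mem (v := fun _ => f) (s := fun _ => B)
    (fun _ _ => hK) hγ'c.continuousOn (fun t _ => (hγ' t).hasDerivWithinAt) hγ'B
    hγc.continuousOn (fun t _ => (hγ t).hasDerivWithinAt) hγB le_rfl s ⟨hs.1, le_rfl⟩
  calc dist (γ' s) (γ s) ≤ dist (γ' 0) (γ 0) * Real.exp (K * (s - 0)) := this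
    _ ≤ dist (γ' 0) (γ 0) * Real.exp (K * T) := by gcongr; linarith [hs.2]
    _ < ρ' / Real.exp (K * T) * Real.exp (K * T) := mul_lt_mul_of_pos_right h0 (Real.exp_pos _)
    _ = ρ' := div_mul_cancel₀ _ (Real.exp_pos _).ne'

variable {ξ : ℝ → E → E}

lemma LocallyLipschitz.exists_forall_dist_flow_lt (hf : LocallyLipschitz f)
    (hξ0 : ∀ x, ξ 0 x = x) (hξ : ∀ x t, HasDerivAt (fun s => ξ s x) (f (ξ t x)) t)
    (a : E) (T : ℝ) {ρ : ℝ} (hρ : 0 < ρ) :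
    ∃ δ > 0, ∀ b, dist b a < δ → ∀ s ∈ Icc (-T) T, dist (ξ s b) (ξ s a) < ρ := by
  -- Backwards in time, `ξ` is the flow of `-f`.
  have hback : ∀ x t, HasDerivAt (fun s => ξ (-s) x) ((-f) (ξ (-t) x)) t := fun x t => by
    simpa [Function.comp_def] using (hξ x (-t)).scomp t (hasDerivAt_neg t)
  obtain ⟨δ₁, hδ₁, h₁⟩ := hf.exists_forall_dist_lt_of_hasDerivAt (hξ a) T hρ
  obtain ⟨δ₂, hδ₂, h₂⟩ :=
    (locallyLipschitz_neg_iff.2 hf).exists_forall_dist_lt_of_hasDerivAt (hback a) T hρ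
  refine ⟨min δ₁ δ₂, lt_min hδ₁ hδ₂, fun b hb s hs => ?_⟩
  rcases le_total 0 s with h0 | h0
  · exact h₁ _ (hξ b) (by simpa [hξ0] using hb.trans_le (min_le_left _ _)) s ⟨h0, hs.2⟩
  · simpa using h₂ _ (hback b) (by simpa [hξ0] using hb.trans_le (min_le_right _ _)) (-s)
      ⟨neg_nonneg.2 h0, neg_le.1 hs.1⟩

lemma LocallyLipschitz.continuous_uncurry_flow (hf : LocallyLipschitz f)
    (hξ0 : ∀ x, ξ 0 x = x) (hξ : ∀ x t, HasDerivAt (fun s => ξ s x) (f (ξ t x)) t) :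
    Continuous (Function.uncurry ξ) := by
  refine continuous_iff_continuousAt.2 fun ⟨t₀, a⟩ => Metric.continuousAt_iff.2 fun ε hε => ?_
  obtain ⟨δ₁, hδ₁, h₁⟩ := hf.exists_forall_dist_flow_lt hξ0 hξ a (|t₀| + 1) (half_pos hε)
  obtain ⟨δ₂, hδ₂, h₂⟩ := Metric.continuousAt_iff.1 (hξ a t₀).continuousAt (ε / 2) (half_pos hε)
  refine ⟨min (min δ₁ δ₂) 1, by positivity, fun ⟨s, b⟩ hsb => ?_⟩
  rw [Prod.dist_eq, max_lt_iff] at hsb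
  obtain ⟨hst, hba⟩ := hsb
  have hs₁ : dist s t₀ < 1 := hst.trans_le (min_le_right _ _)
  have hs₂ : dist s t₀ < δ₂ := hst.trans_le ((min_le_left _ _).trans (min_le_right _ _))
  have hb₁ : dist b a < δ₁ := hba.trans_le ((min_le_left _ _).trans (min_le_left _ _))
  have hs : s ∈ Icc (-(|t₀| + 1)) (|t₀| + 1) := by
    rw [Real.dist_eq] at hs₁
    constructor <;> cases abs_lt.1 hs₁ <;> cases abs_le.1 (le_refl |t₀|) <;> linarith
  calc dist (ξ s b) (ξ t₀ a) ≤ dist (ξ s b) (ξ s a) + dist (ξ s a) (ξ t₀ a) := dist_triangle _ _ _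
    _ < ε / 2 + ε / 2 := add_lt_add (h₁ b hb₁ s hs) (h₂ hs₂)
    _ = ε := add_halves ε

end FlowContinuity

lemma IsNormOn.le_mul_of_forall_dist_lt {E F : Type*} [NormedAddCommGroup E] [NormedSpace ℝ E]
    [AddCommGroup F] [Module ℝ F] {ν₁ : E → ℝ} {ν₂ : F → ℝ} (hν₁ : IsNormOn ν₁)
    (hν₂ : IsNormOn ν₂) {g : E → F} {x y : E} {c δ : ℝ} (hδ : 0 < δ)
    (h : ∀ p ∈ segment ℝ x y, ∀ q ∈ segment ℝ x y, dist q p < δ →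
      ν₂ (g q - g p) ≤ c * ν₁ (q - p)) :
    ν₂ (g y - g x) ≤ c * ν₁ (y - x) := by
  obtain ⟨N, hN⟩ := exists_nat_gt (‖y - x‖ / δ)
  have hN0 : (0 : ℝ) < N := (div_nonneg (norm_nonneg _) hδ.le).trans_lt hN
  set γ : ℕ → E := fun k => x + ((k : ℝ) / N) • (y - x)
  have hγ : ∀ k ≤ N, γ k ∈ segment ℝ x y := fun k hk => by
    rw [segment_eq_image']
    exact ⟨_, ⟨by positivity, div_le_one_of_le₀ (by exact_mod_cast hk) hN0.le⟩, rfl⟩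
  have hstep : ∀ k, γ (k + 1) - γ k = (N : ℝ)⁻¹ • (y - x) := fun k => by
    simp only [γ, add_sub_add_left_eq_sub, ← sub_smul]
    congr 1
    push_cast
    ring
  have hdist : ∀ k, dist (γ (k + 1)) (γ k) < δ := fun k => by
    rw [dist_eq_norm, hstep, norm_smul, Real.norm_of_nonneg (by positivity), inv_mul_lt_iff₀ hN0]
    rw [div_lt_iff₀ hδ] at hN
    linarith
  calc ν₂ (g y - g x) = ν₂ (∑ k ∈ Finset.range N, (g (γ (k + 1)) - g (γ k))) := by
        rw [Finset.sum_range_sub (fun k => g (γ k))]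
        simp [γ, hN0.ne']
    _ ≤ ∑ k ∈ Finset.range N, c * ((N : ℝ)⁻¹ * ν₁ (y - x)) := by
        refine (hν₂.sum_le _ _).trans (Finset.sum_le_sum fun k hk => ?_)
        have hk := Finset.mem_range.1 hk
        rw [← abs_of_pos (inv_pos.2 hN0), ← hν₁.map_smul, ← hstep]
        exact h _ (hγ k hk.le) _ (hγ (k + 1) hk) (hdist k)
    _ = c * ν₁ (y - x) := by
        rw [Finset.sum_const, Finset.card_range, nsmul_eq_mul]
        field_simp

lemma le_exp_mul_of_forall_pos_le {a b S t : ℝ} (h : ∀ ε > 0, a ≤ Real.exp (S + ε * t) * b) :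
    a ≤ Real.exp S * b := by
  have hc : Continuous fun ε => Real.exp (S + ε * t) * b := by fun_prop
  refine ge_of_tendsto (x := 𝓝[>] (0 : ℝ)) ?_ (eventually_nhdsWithin_of_forall h)
  simpa using (hc.tendsto 0).mono_left (nhdsWithin_le_nhds (s := Ioi 0))

section Flow

variable {n : ℕ} {f : (Fin n → ℝ) → Fin n → ℝ} {Jf : (Fin n → ℝ) → Matrix (Fin n) (Fin n) ℝ}
  {ξ : ℝ → (Fin n → ℝ) → Fin n → ℝ}

lemma locallyLipschitz_of_hasFDerivAt_mulVecLin
    (hf : ∀ v, HasFDerivAt f (LinearMap.toContinuousLinearMap (Jf v).mulVecLin) v)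
    (hJf : Continuous Jf) : LocallyLipschitz f := by
  let L : Matrix (Fin n) (Fin n) ℝ →ₗ[ℝ] ((Fin n → ℝ) →L[ℝ] (Fin n → ℝ)) :=
    LinearMap.toContinuousLinearMap.toLinearMap ∘ₗ Matrix.toLin'.toLinearMap
  exact (contDiff_one_iff_hasFDerivAt.2
    ⟨_, L.continuous_of_finiteDimensional.comp hJf, hf⟩).locallyLipschitz

lemma norm_flow_sub_le_exp_integral [NeZero n] {ν : (Fin n → ℝ) → ℝ} (hν : IsNormOn ν)
    {μ : Matrix (Fin n) (Fin n) ℝ → ℝ} (hμ : ∀ M, IsMatrixMeasure ν M (μ M))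
    (hf : ∀ v, HasFDerivAt f (LinearMap.toContinuousLinearMap (Jf v).mulVecLin) v)
    (hJf : Continuous Jf) (hξ0 : ∀ x, ξ 0 x = x)
    (hξ : ∀ x t, HasDerivAt (fun s => ξ s x) (f (ξ t x)) t) {p q : Fin n → ℝ} {T : ℝ}
    (hT : 0 ≤ T) {m : ℝ → ℝ} (hm : Continuous m)
    (hA : ∀ s ∈ Icc 0 T, μ (segmentAverage Jf (ξ s p) (ξ s q)) ≤ m s) :
    ν (ξ T q - ξ T p) ≤ Real.exp (∫ s in (0:ℝ)..T, m s) * ν (q - p) := by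
  have hη : ∀ s, HasDerivAt (fun s => ξ s q - ξ s p)
      (segmentAverage Jf (ξ s p) (ξ s q) *ᵥ (ξ s q - ξ s p)) s := fun s => by
    rw [segmentAverage_mulVec hf hJf]
    exact (hξ q s).sub (hξ p s)
  simpa [hξ0] using hν.le_exp_integral_of_hasDerivAt_mulVec hμ hT hη hm hA

lemma exists_forall_norm_segmentAverage_flow_sub_le (hJf : Continuous Jf)
    (hξ : Continuous (Function.uncurry ξ)) {K : Set (Fin n → ℝ)} (hK : IsCompact K) (T : ℝ)
    {ε : ℝ} (hε : 0 < ε) :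
    ∃ δ > 0, ∀ p ∈ K, ∀ q ∈ K, dist q p < δ → ∀ s ∈ Icc 0 T,
      ‖segmentAverage Jf (ξ s p) (ξ s q) - Jf (ξ s p)‖ ≤ ε := by
  -- Uniform continuity of `G` on a compact set, at `((s, p), (q, r))` and `((s, p), (p, r))`.
  set G : (ℝ × (Fin n → ℝ)) × ((Fin n → ℝ) × ℝ) → Matrix (Fin n) (Fin n) ℝ :=
    fun z => Jf (ξ z.1.1 z.1.2 + z.2.2 • (ξ z.1.1 z.2.1 - ξ z.1.1 z.1.2))
  have hG : Continuous G := by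
    have h₁ : Continuous fun z : (ℝ × (Fin n → ℝ)) × ((Fin n → ℝ) × ℝ) => ξ z.1.1 z.1.2 :=
      hξ.comp continuous_fst
    have h₂ : Continuous fun z : (ℝ × (Fin n → ℝ)) × ((Fin n → ℝ) × ℝ) => ξ z.1.1 z.2.1 :=
      hξ.comp ((continuous_fst.comp continuous_fst).prodMk (continuous_fst.comp continuous_snd))
    exact hJf.comp (h₁.add ((continuous_snd.comp continuous_snd).smul (h₂.sub h₁)))
  have hS : IsCompact ((Icc 0 T ×ˢ K) ×ˢ (K ×ˢ Icc (0 : ℝ) 1)) :=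
    (isCompact_Icc.prod hK).prod (hK.prod isCompact_Icc)
  obtain ⟨δ, hδ, hG'⟩ := Metric.uniformContinuousOn_iff_le.1
    (hS.uniformContinuousOn_of_continuous hG.continuousOn) ε hε
  refine ⟨δ, hδ, fun p hp q hq hpq s hs => norm_segmentAverage_sub_le hJf fun r hr => ?_⟩
  have := hG' ((s, p), (q, r)) ⟨⟨hs, hp⟩, hq, hr⟩ ((s, p), (p, r)) ⟨⟨hs, hp⟩, hp, hr⟩
    (by simpa [Prod.dist_eq] using hpq.le)
  simpa [G, dist_eq_norm] using this

lemma exists_forall_flow_sub_le [NeZero n] {ν : (Fin n → ℝ) → ℝ} (hν : IsNormOn ν)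
    {μ : Matrix (Fin n) (Fin n) ℝ → ℝ} (hμ : ∀ M, IsMatrixMeasure ν M (μ M))
    (hf : ∀ v, HasFDerivAt f (LinearMap.toContinuousLinearMap (Jf v).mulVecLin) v)
    (hJf : Continuous Jf) (hξ0 : ∀ x, ξ 0 x = x)
    (hξ : ∀ x t, HasDerivAt (fun s => ξ s x) (f (ξ t x)) t) {K : Set (Fin n → ℝ)}
    (hK : IsCompact K) {T : ℝ} (hT : 0 ≤ T) {ε : ℝ} (hε : 0 < ε) :
    ∃ δ > 0, ∀ p ∈ K, ∀ q ∈ K, dist q p < δ →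
      ν (ξ T q - ξ T p) ≤ Real.exp ((∫ s in (0:ℝ)..T, μ (Jf (ξ s p))) + ε * T) * ν (q - p) := by
  obtain ⟨L, hL⟩ := lipschitzWith_of_isMatrixMeasure hν hμ
  have hξc := (locallyLipschitz_of_hasFDerivAt_mulVecLin hf hJf).continuous_uncurry_flow hξ0 hξ
  obtain ⟨δ, hδ, hclose⟩ := exists_forall_norm_segmentAverage_flow_sub_le hJf hξc hK T
    (ε := ε / (L + 1)) (by positivity)
  refine ⟨δ, hδ, fun p hp q hq hpq => ?_⟩
  have hm : Continuous fun s => μ (Jf (ξ s p)) :=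
    hL.continuous.comp (hJf.comp (hξc.comp (continuous_id.prodMk continuous_const)))
  have hLε : (L : ℝ) * (ε / (L + 1)) ≤ ε := by
    rw [mul_div_assoc', div_le_iff₀ (by positivity)]
    nlinarith [L.2]
  have hA : ∀ s ∈ Icc 0 T, μ (segmentAverage Jf (ξ s p) (ξ s q)) ≤ μ (Jf (ξ s p)) + ε :=
    fun s hs => by
      set A := segmentAverage Jf (ξ s p) (ξ s q)
      calc μ A ≤ μ (Jf (ξ s p)) + L * dist A (Jf (ξ s p)) := by
            have := hL.dist_le_mul A (Jf (ξ s p))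
            rw [Real.dist_eq] at this
            linarith [le_abs_self (μ A - μ (Jf (ξ s p)))]
        _ ≤ μ (Jf (ξ s p)) + L * (ε / (L + 1)) := by
            rw [dist_eq_norm]; gcongr; exact hclose p hp q hq hpq s hs
        _ ≤ μ (Jf (ξ s p)) + ε := by linarith
  have := norm_flow_sub_le_exp_integral hν hμ hf hJf hξ0 hξ hT
    (m := fun s => μ (Jf (ξ s p)) + ε) (hm.add continuous_const) hA
  rwa [intervalIntegral.integral_add (hm.intervalIntegrable _ _)
    (continuous_const.intervalIntegrable _ _), intervalIntegral.integral_const, smul_eq_mul,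
    sub_zero, mul_comm T] at this

end Flow

/-- `|ξ(t,x̄) − ξ(t,x)| ≤ exp( max_{v∈[x,x̄]} ∫₀ᵗ μ(Jf(ξ(s,v))) ds ) |x̄ − x|`
for the flow `ξ` of a `C¹` vector field `f` with Jacobian `Jf`. -/
theorem solution_dist_upper_bound {n : ℕ} (ν : (Fin n → ℝ) → ℝ) (hν : IsNormOn ν)
    (μ : Matrix (Fin n) (Fin n) ℝ → ℝ) (hμ : ∀ M, IsMatrixMeasure ν M (μ M))
    (f : (Fin n → ℝ) → (Fin n → ℝ)) (Jf : (Fin n → ℝ) → Matrix (Fin n) (Fin n) ℝ)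
    (hf : ∀ v, HasFDerivAt f (LinearMap.toContinuousLinearMap (Jf v).mulVecLin) v)
    (hJf : ∀ i j, Continuous fun v => Jf v i j)
    (ξ : ℝ → (Fin n → ℝ) → (Fin n → ℝ))
    (hξ0 : ∀ x, ξ 0 x = x)
    (hξ : ∀ x t, HasDerivAt (fun s => ξ s x) (f (ξ t x)) t)
    (x xbar : Fin n → ℝ) (t : ℝ) (ht : 0 ≤ t) :
    ν (ξ t xbar - ξ t x) ≤
      Real.exp (⨆ v : segment ℝ x xbar, ∫ s in (0:ℝ)..t, μ (Jf (ξ s ↑v))) *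
        ν (xbar - x) := by
  rcases Nat.eq_zero_or_pos n with rfl | hn
  · rw [Subsingleton.elim (ξ t xbar - ξ t x) 0, hν.map_zero]
    exact mul_nonneg (Real.exp_pos _).le (hν.nonneg _)
  have : NeZero n := ⟨hn.ne'⟩
  have hJc : Continuous Jf := continuous_pi fun i => continuous_pi fun j => hJf i j
  have hξc := (locallyLipschitz_of_hasFDerivAt_mulVecLin hf hJc).continuous_uncurry_flow hξ0 hξ
  obtain ⟨L, hL⟩ := lipschitzWith_of_isMatrixMeasure hν hμ
  have hμξ : Continuous (Function.uncurry fun v s => μ (Jf (ξ s v))) :=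
    hL.continuous.comp (hJc.comp (hξc.comp continuous_swap))
  have hF : Continuous fun v => ∫ s in (0:ℝ)..t, μ (Jf (ξ s v)) :=
    intervalIntegral.continuous_parametric_intervalIntegral_of_continuous' hμξ 0 t
  have hseg : IsCompact (segment ℝ x xbar) := by
    rw [segment_eq_image']
    exact isCompact_Icc.image (by fun_prop)
  have hbdd : BddAbove (range fun v : segment ℝ x xbar => ∫ s in (0:ℝ)..t, μ (Jf (ξ s v))) :=
    image_eq_range (fun v => ∫ s in (0:ℝ)..t, μ (Jf (ξ s v))) _ ▸
      hseg.bddAbove_image hF.continuousOn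
  refine le_exp_mul_of_forall_pos_le (t := t) fun ε hε => ?_
  obtain ⟨δ, hδ, hδ'⟩ := exists_forall_flow_sub_le hν hμ hf hJc hξ0 hξ hseg ht hε
  exact hν.le_mul_of_forall_dist_lt hν hδ fun p hp q hq hpq =>
    (hδ' p hp q hq hpq).trans (by gcongr; exacts [hν.nonneg _, le_ciSup hbdd ⟨p, hp⟩])
end

section
/- Asymptotic weighted average upper bound: let P be a finite set, σ a switching signal with τ_p, P_∞ (persistent modes), and P₊ (strongly persistent modes) as defined, and a_p: [0,∞) → ℝ locally integrable for p ∈ P. Set â_p := limsup_{t→∞, σ(t)=p} a_p(t). If â_p is finite for all p ∈ P_∞, then limsup_{T→∞} (1/T) max_{t∈[0,T]} Σ_{p∈P} ∫_0^t a_p(s) 1_{σ(s)=p} ds ≤ limsup_{T→∞} (1/T) max_{t∈[0,T]} Σ_{p∈P₊} â_p τ_p(t). -/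
open Filter MeasureTheory
open Topology

def PiecewiseConstantOn {P : Type*} (σ : ℝ → P) : Prop :=
  ∀ T : ℝ, 0 < T → ∃ (n : ℕ) (a : ℕ → ℝ), a 0 = 0 ∧ a n = T ∧
    (∀ i < n, a i < a (i + 1)) ∧
    ∀ i < n, ∀ s ∈ Set.Ico (a i) (a (i + 1)), σ s = σ (a i)

noncomputable def activeTime {P : Type*} [DecidableEq P] (σ : ℝ → P) (p : P)
    (t : ℝ) : ℝ :=
  ∫ s in (0:ℝ)..t, if σ s = p then (1:ℝ) else 0

/-- Mode `p` is persistent: `sup{t : σ(t) = p} = ∞`. -/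
def Persistent {P : Type*} (σ : ℝ → P) (p : P) : Prop :=
  ∀ T : ℝ, ∃ t, T ≤ t ∧ σ t = p

/- Asymptotic weighted average upper bound:
`limsup_{T→∞} (1/T) max_{t∈[0,T]} Σ_p ∫₀ᵗ a_p(s) 1_{σ(s)=p} ds`
`≤ limsup_{T→∞} (1/T) max_{t∈[0,T]} Σ_{p∈P₊} â_p τ_p(t)`,
where `â_p = limsup_{t→∞, σ(t)=p} a_p(t)` is finite for all persistent `p`,
with `a_p` bounded above along active times of persistent modes. -/
open Classical in
lemma meas_piece {P : Type*} (σ : ℝ → P) (hσ : PiecewiseConstantOn σ) (p : P)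
    (T : ℝ) (hT : 0 < T) : MeasurableSet {s | s ∈ Set.Ico (0:ℝ) T ∧ σ s = p} := by
  obtain ⟨n, b, hb0, hbn, hmono, hval⟩ := hσ T hT
  have hmono' : ∀ j k, j ≤ k → k ≤ n → b j ≤ b k := by
    intro j k hjk hkn
    induction k with
    | zero => have : j = 0 := by omega
              rw [this]
    | succ m ih =>
      rcases Nat.lt_or_ge j (m+1) with hj | hj
      · exact le_trans (ih (by omega) (by omega)) (le_of_lt (hmono m (by omega)))
      · have : j = m + 1 := by omega
        rw [this]
  have hkey : {s | s ∈ Set.Ico (0:ℝ) T ∧ σ s = p} =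
      ⋃ i ∈ Finset.range n, (if σ (b i) = p then Set.Ico (b i) (b (i+1)) else ∅) := by
    ext s
    simp only [Set.mem_setOf_eq, Set.mem_iUnion, Finset.mem_range]
    constructor
    · rintro ⟨⟨hs0, hsT⟩, hsp⟩
      have hP0 : (fun i => b i ≤ s) 0 := by simpa [hb0] using hs0
      have hspec : b (Nat.findGreatest (fun i => b i ≤ s) n) ≤ s :=
        Nat.findGreatest_spec (P := fun i => b i ≤ s) (Nat.zero_le n) hP0
      set i := Nat.findGreatest (fun i => b i ≤ s) n with hi
      have hin : i < n := by
        rcases lt_or_eq_of_le (Nat.findGreatest_le (P := fun i => b i ≤ s) (n := n)) with h | h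
        · exact h
        · exfalso
          rw [← hi] at h
          rw [h, hbn] at hspec
          exact absurd hspec (not_le.mpr hsT)
      have hlt : s < b (i+1) := by
        by_contra h
        exact Nat.findGreatest_is_greatest (Nat.lt_succ_self i) hin (not_lt.mp h)
      have hmem : s ∈ Set.Ico (b i) (b (i+1)) := ⟨hspec, hlt⟩
      have hv := hval i hin s hmem
      refine ⟨i, hin, ?_⟩
      rw [show σ (b i) = p from hv ▸ hsp, if_pos rfl]
      exact hmem
    · rintro ⟨i, hin, hs⟩
      by_cases h : σ (b i) = p
      · rw [if_pos h] at hs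
        have h1 := hval i hin s hs
        have hs0 : (0:ℝ) ≤ s := by
          have := hmono' 0 i (Nat.zero_le i) (le_of_lt hin)
          rw [hb0] at this; linarith [hs.1]
        have hsT : s < T := by
          have := hmono' (i+1) n hin (le_refl n)
          rw [hbn] at this; linarith [hs.2]
        exact ⟨⟨hs0, hsT⟩, h1.trans h⟩
      · rw [if_neg h] at hs; exact absurd hs (Set.notMem_empty s)
  rw [hkey]
  refine MeasurableSet.biUnion (Finset.range n).countable_toSet fun i _ => ?_
  split <;> [exact measurableSet_Ico; exact MeasurableSet.empty]

lemma meas_active {P : Type*} (σ : ℝ → P) (hσ : PiecewiseConstantOn σ) (p : P) :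
    MeasurableSet {s : ℝ | 0 ≤ s ∧ σ s = p} := by
  have : {s : ℝ | 0 ≤ s ∧ σ s = p} =
      ⋃ n : ℕ, {s | s ∈ Set.Ico (0:ℝ) (n+1) ∧ σ s = p} := by
    ext s
    simp only [Set.mem_setOf_eq, Set.mem_iUnion, Set.mem_Ico]
    constructor
    · rintro ⟨hs0, hsp⟩
      obtain ⟨n, hn⟩ := exists_nat_gt s
      exact ⟨n, ⟨⟨hs0, by linarith [(by exact_mod_cast Nat.le_succ n : (n:ℝ) ≤ n+1)]⟩, hsp⟩⟩
    · rintro ⟨n, ⟨⟨hs0, _⟩, hsp⟩⟩; exact ⟨hs0, hsp⟩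
  rw [this]
  exact MeasurableSet.iUnion fun n => meas_piece σ hσ p _ (by positivity)

lemma intInt_ind {P : Type*} [DecidableEq P] (σ : ℝ → P) (hσ : PiecewiseConstantOn σ)
    (p : P) (f : ℝ → ℝ) (hf : ∀ T : ℝ, IntervalIntegrable f volume 0 T)
    {u v : ℝ} (hu : 0 ≤ u) (huv : u ≤ v) :
    IntervalIntegrable (fun s => if σ s = p then f s else 0) volume u v := by
  have key : IntervalIntegrable (fun s => if σ s = p then f s else 0) volume 0 v := by
    rw [intervalIntegrable_iff_integrableOn_Ioc_of_le (hu.trans huv)]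
    have h1 : IntegrableOn f (Set.Ioc 0 v) volume := by
      rw [← intervalIntegrable_iff_integrableOn_Ioc_of_le (hu.trans huv)]
      exact hf v
    have h2 := h1.indicator (meas_active σ hσ p)
    refine h2.congr_fun ?_ measurableSet_Ioc
    intro s hs
    simp only [Set.indicator_apply, Set.mem_setOf_eq]
    by_cases h : σ s = p
    · rw [if_pos ⟨le_of_lt hs.1, h⟩, if_pos h]
    · rw [if_neg (fun hc => h hc.2), if_neg h]
  exact key.mono_set (by rw [Set.uIcc_of_le (hu.trans huv), Set.uIcc_of_le huv]
                         exact Set.Icc_subset_Icc hu le_rfl)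

lemma tau_nonneg {P : Type*} [DecidableEq P] (σ : ℝ → P) (p : P) {t : ℝ} (ht : 0 ≤ t) :
    0 ≤ activeTime σ p t :=
  intervalIntegral.integral_nonneg ht (fun s _ => by positivity)

lemma tau_le {P : Type*} [DecidableEq P] (σ : ℝ → P) (hσ : PiecewiseConstantOn σ)
    (p : P) {t : ℝ} (ht : 0 ≤ t) : activeTime σ p t ≤ t := by
  have : activeTime σ p t ≤ ∫ _ in (0:ℝ)..t, (1:ℝ) :=
    intervalIntegral.integral_mono_on ht
      (intInt_ind σ hσ p (fun _ => 1) (fun T => intervalIntegrable_const) le_rfl ht)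
      intervalIntegrable_const (fun s _ => by split <;> norm_num)
  simpa using this

lemma tau_add {P : Type*} [DecidableEq P] (σ : ℝ → P) (hσ : PiecewiseConstantOn σ)
    (p : P) {u v : ℝ} (hu : 0 ≤ u) (huv : u ≤ v) :
    activeTime σ p v = activeTime σ p u
      + ∫ s in u..v, if σ s = p then (1:ℝ) else 0 :=
  (intervalIntegral.integral_add_adjacent_intervals
    (intInt_ind σ hσ p (fun _ => 1) (fun T => intervalIntegrable_const) le_rfl hu)
    (intInt_ind σ hσ p (fun _ => 1) (fun T => intervalIntegrable_const) hu huv)).symm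

lemma tau_mono {P : Type*} [DecidableEq P] (σ : ℝ → P) (hσ : PiecewiseConstantOn σ)
    (p : P) {u v : ℝ} (hu : 0 ≤ u) (huv : u ≤ v) :
    activeTime σ p u ≤ activeTime σ p v := by
  rw [tau_add σ hσ p hu huv]
  have : 0 ≤ ∫ s in u..v, if σ s = p then (1:ℝ) else 0 :=
    intervalIntegral.integral_nonneg huv (fun s _ => by positivity)
  linarith

lemma I_le_abs {P : Type*} [DecidableEq P] (σ : ℝ → P) (hσ : PiecewiseConstantOn σ)
    (p : P) (f : ℝ → ℝ) (hf : ∀ T : ℝ, IntervalIntegrable f volume 0 T)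
    {t T₁ : ℝ} (ht : 0 ≤ t) (h : t ≤ T₁) :
    (∫ s in (0:ℝ)..t, if σ s = p then f s else 0)
      ≤ ∫ s in (0:ℝ)..T₁, |if σ s = p then f s else 0| := by
  have hint : ∀ {u v : ℝ}, 0 ≤ u → u ≤ v →
      IntervalIntegrable (fun s => if σ s = p then f s else 0) volume u v :=
    fun hu huv => intInt_ind σ hσ p f hf hu huv
  have h1 : (∫ s in (0:ℝ)..t, if σ s = p then f s else 0)
      ≤ ∫ s in (0:ℝ)..t, |if σ s = p then f s else 0| :=
    intervalIntegral.integral_mono_on ht (hint le_rfl ht) (hint le_rfl ht).abs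
      (fun s _ => le_abs_self _)
  have h2 : (∫ s in (0:ℝ)..t, |if σ s = p then f s else 0|)
      ≤ ∫ s in (0:ℝ)..T₁, |if σ s = p then f s else 0| := by
    rw [← intervalIntegral.integral_add_adjacent_intervals (hint le_rfl ht).abs
      (hint ht h).abs]
    have : 0 ≤ ∫ s in t..T₁, |if σ s = p then f s else 0| :=
      intervalIntegral.integral_nonneg h (fun s _ => abs_nonneg _)
    linarith
  linarith

lemma est_pers {P : Type*} [DecidableEq P] (σ : ℝ → P) (hσ : PiecewiseConstantOn σ)
    (p : P) (f : ℝ → ℝ) (hf : ∀ T : ℝ, IntervalIntegrable f volume 0 T)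
    (hb : IsBoundedUnder (· ≤ ·) (atTop ⊓ Filter.principal {t | σ t = p}) f)
    {ε : ℝ} (hε : 0 < ε) :
    ∃ C, ∀ t, 0 ≤ t →
      (∫ s in (0:ℝ)..t, if σ s = p then f s else 0)
        ≤ (limsup f (atTop ⊓ Filter.principal {t | σ t = p})) * activeTime σ p t
          + ε * t + C := by
  set ahat := limsup f (atTop ⊓ Filter.principal {t | σ t = p}) with hahat
  have hev : ∀ᶠ u in (atTop ⊓ Filter.principal {t | σ t = p}), f u < ahat + ε :=
    eventually_lt_of_limsup_lt (by linarith) hb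
  rw [eventually_inf_principal] at hev
  rw [eventually_atTop] at hev
  obtain ⟨T', hT'⟩ := hev
  set T₁ := max T' 0 with hT₁
  have hT₁0 : 0 ≤ T₁ := le_max_right _ _
  have hint : ∀ {u v : ℝ}, 0 ≤ u → u ≤ v →
      IntervalIntegrable (fun s => if σ s = p then f s else 0) volume u v :=
    fun hu huv => intInt_ind σ hσ p f hf hu huv
  have hindint : ∀ {u v : ℝ}, 0 ≤ u → u ≤ v →
      IntervalIntegrable (fun s => if σ s = p then (1:ℝ) else 0) volume u v :=
    fun hu huv => intInt_ind σ hσ p (fun _ => 1) (fun _ => intervalIntegrable_const) hu huv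
  set C₂ := ∫ s in (0:ℝ)..T₁, |if σ s = p then f s else 0| with hC₂
  refine ⟨((∫ s in (0:ℝ)..T₁, if σ s = p then f s else 0) + |ahat + ε| * activeTime σ p T₁)
      ⊔ (C₂ + |ahat| * T₁), fun t ht => ?_⟩
  rcases le_or_gt t T₁ with hcase | hcase
  · -- small t
    have h1 : (∫ s in (0:ℝ)..t, if σ s = p then f s else 0) ≤ C₂ :=
      I_le_abs σ hσ p f hf ht hcase
    have h2 : -( |ahat| * T₁) ≤ ahat * activeTime σ p t := by
      have h3 : |ahat * activeTime σ p t| ≤ |ahat| * T₁ := by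
        rw [abs_mul]
        have := tau_nonneg σ p ht
        have := tau_le σ hσ p ht
        have : |activeTime σ p t| ≤ T₁ := by
          rw [abs_of_nonneg (tau_nonneg σ p ht)]; linarith [tau_le σ hσ p ht]
        exact mul_le_mul_of_nonneg_left this (abs_nonneg _)
      linarith [neg_abs_le (ahat * activeTime σ p t)]
    have h4 : 0 ≤ ε * t := by positivity
    calc (∫ s in (0:ℝ)..t, if σ s = p then f s else 0) ≤ C₂ := h1
    _ ≤ ahat * activeTime σ p t + ε * t + (C₂ + |ahat| * T₁) := by linarith
    _ ≤ _ := by gcongr; exact le_max_right _ _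
  · -- large t
    have ht1 : T₁ ≤ t := le_of_lt hcase
    have hsplit : (∫ s in (0:ℝ)..t, if σ s = p then f s else 0)
        = (∫ s in (0:ℝ)..T₁, if σ s = p then f s else 0)
          + ∫ s in T₁..t, if σ s = p then f s else 0 :=
      (intervalIntegral.integral_add_adjacent_intervals (hint le_rfl hT₁0)
        (hint hT₁0 ht1)).symm
    have hmono : (∫ s in T₁..t, if σ s = p then f s else 0)
        ≤ ∫ s in T₁..t, if σ s = p then (ahat + ε) else 0 := by
      refine intervalIntegral.integral_mono_on ht1 (hint hT₁0 ht1)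
        ?_ (fun s hs => ?_)
      · have : (fun s => if σ s = p then (ahat + ε) else 0)
            = fun s => (ahat + ε) * (if σ s = p then (1:ℝ) else 0) := by
          funext s; split <;> ring
        rw [this]
        exact (hindint hT₁0 ht1).const_mul _
      · by_cases h : σ s = p
        · rw [if_pos h, if_pos h]
          exact le_of_lt (hT' s (le_trans (le_max_left _ _) hs.1) h)
        · rw [if_neg h, if_neg h]
    have hconst : (∫ s in T₁..t, if σ s = p then (ahat + ε) else 0)
        = (ahat + ε) * (activeTime σ p t - activeTime σ p T₁) := by
      have heq : (fun s => if σ s = p then (ahat + ε) else 0)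
          = fun s => (ahat + ε) * (if σ s = p then (1:ℝ) else 0) := by
        funext s; split <;> ring
      rw [heq, intervalIntegral.integral_const_mul]
      congr 1
      have := tau_add σ hσ p hT₁0 ht1
      linarith
    have hτt := tau_le σ hσ p ht
    have hτt0 := tau_nonneg σ p ht
    have hτT₁0 := tau_nonneg σ p hT₁0
    have habs : -((ahat + ε) * activeTime σ p T₁) ≤ |ahat + ε| * activeTime σ p T₁ := by
      rw [← neg_mul]
      exact mul_le_mul_of_nonneg_right (neg_le_abs _) hτT₁0
    calc (∫ s in (0:ℝ)..t, if σ s = p then f s else 0)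
        = (∫ s in (0:ℝ)..T₁, if σ s = p then f s else 0)
          + ∫ s in T₁..t, if σ s = p then f s else 0 := hsplit
      _ ≤ (∫ s in (0:ℝ)..T₁, if σ s = p then f s else 0)
          + (ahat + ε) * (activeTime σ p t - activeTime σ p T₁) := by
            rw [← hconst]; linarith
      _ = ahat * activeTime σ p t + ε * activeTime σ p t
          + ((∫ s in (0:ℝ)..T₁, if σ s = p then f s else 0)
            - (ahat + ε) * activeTime σ p T₁) := by ring
      _ ≤ ahat * activeTime σ p t + ε * t
          + ((∫ s in (0:ℝ)..T₁, if σ s = p then f s else 0)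
            + |ahat + ε| * activeTime σ p T₁) := by
            have : ε * activeTime σ p t ≤ ε * t := by
              exact mul_le_mul_of_nonneg_left hτt (le_of_lt hε)
            linarith
      _ ≤ _ := by gcongr; exact le_max_left _ _

lemma rho_tendsto_zero {P : Type*} [DecidableEq P] (σ : ℝ → P) (hσ : PiecewiseConstantOn σ)
    (p : P) (h : limsup (fun u => activeTime σ p u / u) atTop ≤ (0:ℝ)) :
    Tendsto (fun u => activeTime σ p u / u) atTop (𝓝 0) := by
  have hev : ∀ᶠ u in atTop, 0 ≤ activeTime σ p u / u ∧ activeTime σ p u / u ≤ 1 := by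
    filter_upwards [eventually_ge_atTop (1:ℝ)] with u hu
    have hu0 : (0:ℝ) < u := by linarith
    constructor
    · exact div_nonneg (tau_nonneg σ p hu0.le) hu0.le
    · rw [div_le_one hu0]; exact tau_le σ hσ p hu0.le
  have hb : IsBoundedUnder (· ≤ ·) atTop (fun u => activeTime σ p u / u) :=
    isBoundedUnder_of_eventually_le (hev.mono fun u hu => hu.2)
  have hb' : IsBoundedUnder (· ≥ ·) atTop (fun u => activeTime σ p u / u) :=
    isBoundedUnder_of_eventually_ge (hev.mono fun u hu => hu.1)
  have hsup : limsup (fun u => activeTime σ p u / u) atTop = 0 :=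
    le_antisymm h (le_limsup_of_frequently_le
      ((hev.mono fun u hu => hu.1).frequently) hb)
  have hinf : liminf (fun u => activeTime σ p u / u) atTop = 0 :=
    le_antisymm ((liminf_le_limsup hb hb').trans (le_of_eq hsup))
      (le_liminf_of_le hb.isCoboundedUnder_ge (hev.mono fun u hu => hu.1))
  exact tendsto_of_liminf_eq_limsup hinf hsup hb hb'

lemma est_nonpers {P : Type*} [DecidableEq P] (σ : ℝ → P) (hσ : PiecewiseConstantOn σ)
    (p : P) (f : ℝ → ℝ) (hf : ∀ T : ℝ, IntervalIntegrable f volume 0 T)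
    (hp : ¬ Persistent σ p) :
    ∃ C, (∀ t, 0 ≤ t → (∫ s in (0:ℝ)..t, if σ s = p then f s else 0) ≤ C) ∧
      Tendsto (fun u => activeTime σ p u / u) atTop (𝓝 0) := by
  rw [Persistent] at hp
  push_neg at hp
  obtain ⟨T, hT⟩ := hp
  set T₁ := max T 0 with hT₁def
  have hT₁0 : 0 ≤ T₁ := le_max_right _ _
  have hnot : ∀ s, T₁ ≤ s → σ s ≠ p := fun s hs => (hT s (le_trans (le_max_left _ _) hs))
  have hzero : ∀ {u v : ℝ}, T₁ ≤ u → u ≤ v → ∀ (g : ℝ → ℝ),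
      (∫ s in u..v, if σ s = p then g s else 0) = 0 := by
    intro u v hu huv g
    rw [intervalIntegral.integral_congr (g := fun _ => (0:ℝ))
      (fun s hs => ?_), intervalIntegral.integral_zero]
    rw [Set.uIcc_of_le huv] at hs
    exact if_neg (hnot s (le_trans hu hs.1))
  have hconst : ∀ {t : ℝ} (g : ℝ → ℝ), (∀ T : ℝ, IntervalIntegrable g volume 0 T) → T₁ ≤ t →
      (∫ s in (0:ℝ)..t, if σ s = p then g s else 0)
        = ∫ s in (0:ℝ)..T₁, if σ s = p then g s else 0 := by
    intro t g hg ht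
    rw [← intervalIntegral.integral_add_adjacent_intervals
      (intInt_ind σ hσ p g hg le_rfl hT₁0) (intInt_ind σ hσ p g hg hT₁0 ht),
      hzero le_rfl ht g, add_zero]
  refine ⟨∫ s in (0:ℝ)..T₁, |if σ s = p then f s else 0|, fun t ht => ?_, ?_⟩
  · rcases le_or_gt t T₁ with hc | hc
    · exact I_le_abs σ hσ p f hf ht hc
    · rw [hconst f hf hc.le]
      exact I_le_abs σ hσ p f hf hT₁0 le_rfl
  · have hevc : ∀ᶠ u in atTop, activeTime σ p u / u
        = (activeTime σ p T₁) / u := by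
      filter_upwards [eventually_ge_atTop T₁] with u hu
      have : activeTime σ p u = activeTime σ p T₁ := by
        rw [activeTime, activeTime]
        exact hconst (fun _ => 1) (fun _ => intervalIntegrable_const) hu
      rw [this]
    refine Tendsto.congr' (EventuallyEq.symm hevc) ?_
    exact Tendsto.div_atTop tendsto_const_nhds tendsto_id

open Classical in
lemma key_est {P : Type*} [DecidableEq P] (σ : ℝ → P) (hσ : PiecewiseConstantOn σ)
    (p : P) (f : ℝ → ℝ) (hf : ∀ T : ℝ, IntervalIntegrable f volume 0 T)
    (hfin : Persistent σ p →
      IsBoundedUnder (· ≤ ·) (atTop ⊓ Filter.principal {t | σ t = p}) f)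
    {ε : ℝ} (hε : 0 < ε) :
    ∃ C, ∀ᶠ T in atTop, ∀ t, 0 ≤ t → t ≤ T →
      (∫ s in (0:ℝ)..t, if σ s = p then f s else 0)
        ≤ (if 0 < limsup (fun u => activeTime σ p u / u) atTop then
            limsup f (atTop ⊓ Filter.principal {t | σ t = p}) * activeTime σ p t
          else 0) + ε * T + C := by
  by_cases hp : Persistent σ p
  · set ahat := limsup f (atTop ⊓ Filter.principal {t | σ t = p}) with hahat
    obtain ⟨C, hC⟩ := est_pers σ hσ p f hf (hfin hp) (half_pos hε)
    by_cases hcond : 0 < limsup (fun u => activeTime σ p u / u) atTop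
    · refine ⟨C, ?_⟩
      filter_upwards [eventually_ge_atTop (0:ℝ)] with T hT0 t ht htT
      rw [if_pos hcond]
      have := hC t ht
      have h2 : ε / 2 * t ≤ ε * T := by nlinarith
      linarith
    · -- weak persistence
      have htend := rho_tendsto_zero σ hσ p (not_lt.mp hcond)
      by_cases hsign : ahat ≤ 0
      · refine ⟨C, ?_⟩
        filter_upwards [eventually_ge_atTop (0:ℝ)] with T hT0 t ht htT
        rw [if_neg hcond]
        have := hC t ht
        have h2 : ε / 2 * t ≤ ε * T := by nlinarith
        have h3 : ahat * activeTime σ p t ≤ 0 :=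
          mul_nonpos_of_nonpos_of_nonneg hsign (tau_nonneg σ p ht)
        linarith
      · push_neg at hsign
        refine ⟨C, ?_⟩
        have hev2 : ∀ᶠ T in atTop, activeTime σ p T / T < ε / 2 / ahat :=
          htend.eventually_lt_const (by positivity)
        filter_upwards [eventually_ge_atTop (1:ℝ), hev2] with T hT1 hT2 t ht htT
        rw [if_neg hcond]
        have hT0 : (0:ℝ) < T := by linarith
        have h1 := hC t ht
        have h2 : ε / 2 * t ≤ ε / 2 * T := by nlinarith
        have h3 : activeTime σ p t ≤ activeTime σ p T := tau_mono σ hσ p ht htT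
        have h4 : activeTime σ p T ≤ ε / 2 / ahat * T := by
          rw [div_lt_iff₀ hT0] at hT2
          linarith
        have h5 : ahat * activeTime σ p t ≤ ε / 2 * T := by
          calc ahat * activeTime σ p t ≤ ahat * (ε / 2 / ahat * T) := by
                exact mul_le_mul_of_nonneg_left (h3.trans h4) hsign.le
            _ = ε / 2 * T := by field_simp
        linarith
  · obtain ⟨C, hC, htend⟩ := est_nonpers σ hσ p f hf hp
    have hlim : limsup (fun u => activeTime σ p u / u) atTop = 0 := htend.limsup_eq
    refine ⟨C, ?_⟩
    filter_upwards [eventually_ge_atTop (0:ℝ)] with T hT0 t ht htT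
    rw [hlim, if_neg (lt_irrefl 0)]
    have := hC t ht
    nlinarith

open Classical in
theorem asymptotic_weighted_average_upper {P : Type*} [Fintype P] [DecidableEq P]
    (σ : ℝ → P) (hσ : PiecewiseConstantOn σ)
    (a : P → ℝ → ℝ)
    (hloc : ∀ p (T : ℝ), IntervalIntegrable (a p) volume 0 T)
    (hbdd : ∀ p, Persistent σ p → ∃ C, ∀ t, 0 ≤ t → σ t = p → a p t ≤ C)
    (hfin : ∀ p, Persistent σ p →
      IsBoundedUnder (· ≤ ·) (atTop ⊓ Filter.principal {t | σ t = p}) (a p) ∧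
        IsCoboundedUnder (· ≤ ·) (atTop ⊓ Filter.principal {t | σ t = p}) (a p)) :
    limsup (fun T : ℝ => (1 / T) *
        sSup ((fun t => ∑ p, ∫ s in (0:ℝ)..t, if σ s = p then a p s else 0) ''
          Set.Icc 0 T)) atTop ≤
      limsup (fun T : ℝ => (1 / T) *
        sSup ((fun t => ∑ p,
          if 0 < limsup (fun u => activeTime σ p u / u) atTop then
            limsup (a p) (atTop ⊓ Filter.principal {t | σ t = p}) * activeTime σ p t
          else 0) '' Set.Icc 0 T)) atTop := by
  set F : ℝ → ℝ := fun t => ∑ p, ∫ s in (0:ℝ)..t, if σ s = p then a p s else 0 with hF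
  set G : ℝ → ℝ := fun t => ∑ p,
      if 0 < limsup (fun u => activeTime σ p u / u) atTop then
        limsup (a p) (atTop ⊓ Filter.principal {t | σ t = p}) * activeTime σ p t
      else 0 with hG
  set K := ∑ p : P, |limsup (a p) (atTop ⊓ Filter.principal {t | σ t = p})| with hK
  have hK0 : 0 ≤ K := Finset.sum_nonneg fun p _ => abs_nonneg _
  have hGbound : ∀ T t : ℝ, 0 ≤ t → t ≤ T → G t ≤ K * T := by
    intro T t ht htT
    rw [hG, hK, Finset.sum_mul]
    refine Finset.sum_le_sum fun p _ => ?_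
    split
    · calc limsup (a p) (atTop ⊓ Filter.principal {t | σ t = p}) * activeTime σ p t
          ≤ |limsup (a p) (atTop ⊓ Filter.principal {t | σ t = p}) * activeTime σ p t| :=
            le_abs_self _
        _ = |limsup (a p) (atTop ⊓ Filter.principal {t | σ t = p})| * |activeTime σ p t| :=
            abs_mul _ _
        _ ≤ |limsup (a p) (atTop ⊓ Filter.principal {t | σ t = p})| * T := by
            refine mul_le_mul_of_nonneg_left ?_ (abs_nonneg _)
            rw [abs_of_nonneg (tau_nonneg σ p ht)]
            exact (tau_le σ hσ p ht).trans htT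
    · exact mul_nonneg (abs_nonneg _) (ht.trans htT)
  have hG0 : G 0 = 0 := by
    rw [hG]
    refine Finset.sum_eq_zero fun p _ => ?_
    split
    · simp [activeTime, intervalIntegral.integral_same]
    · rfl
  have hF0 : F 0 = 0 := by
    rw [hF]
    exact Finset.sum_eq_zero fun p _ => intervalIntegral.integral_same
  -- bounds for the RHS sequence
  have hRub : ∀ᶠ T in atTop, (1 / T) * sSup (G '' Set.Icc 0 T) ≤ K := by
    filter_upwards [eventually_ge_atTop (1:ℝ)] with T hT1
    have hT0 : (0:ℝ) < T := lt_of_lt_of_le one_pos hT1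
    have hsup : sSup (G '' Set.Icc 0 T) ≤ K * T := by
      refine csSup_le ((Set.nonempty_Icc.mpr hT0.le).image _) ?_
      rintro y ⟨t, ht, rfl⟩
      exact hGbound T t ht.1 ht.2
    calc (1 / T) * sSup (G '' Set.Icc 0 T) ≤ (1 / T) * (K * T) :=
          mul_le_mul_of_nonneg_left hsup (by positivity)
      _ = K := by field_simp
  have hRlb : ∀ᶠ T in atTop, 0 ≤ (1 / T) * sSup (G '' Set.Icc 0 T) := by
    filter_upwards [eventually_ge_atTop (1:ℝ)] with T hT1
    have hT0 : (0:ℝ) < T := lt_of_lt_of_le one_pos hT1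
    have hbddA : BddAbove (G '' Set.Icc 0 T) := by
      refine ⟨K * T, ?_⟩
      rintro y ⟨t, ht, rfl⟩
      exact hGbound T t ht.1 ht.2
    have h0mem : G 0 ∈ G '' Set.Icc (0:ℝ) T := ⟨0, Set.mem_Icc.mpr ⟨le_rfl, hT0.le⟩, rfl⟩
    have hs0 : (0:ℝ) ≤ sSup (G '' Set.Icc 0 T) := by
      have := le_csSup hbddA h0mem
      rwa [hG0] at this
    exact mul_nonneg (by positivity) hs0
  have hRbdd : IsBoundedUnder (· ≤ ·) atTop
      (fun T : ℝ => (1 / T) * sSup (G '' Set.Icc 0 T)) :=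
    isBoundedUnder_of_eventually_le hRub
  have hRcob : IsCoboundedUnder (· ≤ ·) atTop
      (fun T : ℝ => (1 / T) * sSup (G '' Set.Icc 0 T)) :=
    isCoboundedUnder_le_of_eventually_le atTop hRlb
  refine le_of_forall_pos_le_add fun ε hε => ?_
  set δ := ε / (2 * ((Fintype.card P : ℝ) + 1)) with hδ
  have hδ0 : 0 < δ := by rw [hδ]; positivity
  choose C hC using fun p : P =>
    key_est σ hσ p (a p) (hloc p) (fun hp => (hfin p hp).1) hδ0
  have hall : ∀ᶠ T in atTop, ∀ p : P, ∀ t, 0 ≤ t → t ≤ T →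
      (∫ s in (0:ℝ)..t, if σ s = p then a p s else 0)
        ≤ (if 0 < limsup (fun u => activeTime σ p u / u) atTop then
            limsup (a p) (atTop ⊓ Filter.principal {t | σ t = p}) * activeTime σ p t
          else 0) + δ * T + C p := eventually_all.mpr hC
  set C0 := ∑ p : P, C p with hC0
  have hCto : ∀ᶠ T in atTop, C0 / T ≤ ε / 4 :=
    Tendsto.eventually_le_const (by positivity)
      (Tendsto.div_atTop tendsto_const_nhds tendsto_id)
  have hcardδ : (Fintype.card P : ℝ) * δ ≤ ε / 2 := by
    have h1 : ((Fintype.card P : ℝ) + 1) * δ = ε / 2 := by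
      rw [hδ]; field_simp
    have h2 : (Fintype.card P : ℝ) * δ ≤ ((Fintype.card P : ℝ) + 1) * δ :=
      mul_le_mul_of_nonneg_right (by linarith) hδ0.le
    linarith
  have hmain : ∀ᶠ T in atTop, (1 / T) * sSup (F '' Set.Icc 0 T)
      ≤ (1 / T) * sSup (G '' Set.Icc 0 T) + ε := by
    filter_upwards [hall, eventually_ge_atTop (1:ℝ), hCto] with T h1 hT1 h2
    have hT0 : (0:ℝ) < T := lt_of_lt_of_le one_pos hT1
    have hGbddA : BddAbove (G '' Set.Icc 0 T) := by
      refine ⟨K * T, ?_⟩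
      rintro y ⟨t, ht, rfl⟩
      exact hGbound T t ht.1 ht.2
    have hFle : ∀ t ∈ Set.Icc (0:ℝ) T,
        F t ≤ sSup (G '' Set.Icc 0 T) + ((Fintype.card P : ℝ) * (δ * T) + C0) := by
      intro t ht
      have hsum : F t ≤ G t + ((Fintype.card P : ℝ) * (δ * T) + C0) := by
        rw [hF, hG, hC0]
        have := Finset.sum_le_sum (fun p (_ : p ∈ Finset.univ) => h1 p t ht.1 ht.2)
        rw [Finset.sum_add_distrib, Finset.sum_add_distrib] at this
        simp only [Finset.sum_const, Finset.card_univ, nsmul_eq_mul] at this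
        calc (∑ p, ∫ s in (0:ℝ)..t, if σ s = p then a p s else 0)
            ≤ _ := this
          _ = _ := by rw [add_assoc]
      have hGle : G t ≤ sSup (G '' Set.Icc 0 T) :=
        le_csSup hGbddA ⟨t, ht, rfl⟩
      linarith
    have hsup : sSup (F '' Set.Icc 0 T)
        ≤ sSup (G '' Set.Icc 0 T) + ((Fintype.card P : ℝ) * (δ * T) + C0) := by
      refine csSup_le ((Set.nonempty_Icc.mpr hT0.le).image _) ?_
      rintro y ⟨t, ht, rfl⟩
      exact hFle t ht
    have hTT : T / T = 1 := div_self hT0.ne'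
    calc (1 / T) * sSup (F '' Set.Icc 0 T)
        ≤ (1 / T) * (sSup (G '' Set.Icc 0 T) + ((Fintype.card P : ℝ) * (δ * T) + C0)) :=
          mul_le_mul_of_nonneg_left hsup (by positivity)
      _ = (1 / T) * sSup (G '' Set.Icc 0 T) + ((Fintype.card P : ℝ) * δ * (T / T) + C0 / T) := by
          ring
      _ = (1 / T) * sSup (G '' Set.Icc 0 T) + ((Fintype.card P : ℝ) * δ + C0 / T) := by
          rw [hTT, mul_one]
      _ ≤ (1 / T) * sSup (G '' Set.Icc 0 T) + ε := by
          have : (Fintype.card P : ℝ) * δ + C0 / T ≤ ε / 2 + ε / 4 := add_le_add hcardδ h2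
          linarith
  have hLlb : ∀ᶠ T in atTop, 0 ≤ (1 / T) * sSup (F '' Set.Icc 0 T) := by
    filter_upwards [hall, eventually_ge_atTop (1:ℝ)] with T h1 hT1
    have hT0 : (0:ℝ) < T := lt_of_lt_of_le one_pos hT1
    have hFbddA : BddAbove (F '' Set.Icc 0 T) := by
      refine ⟨K * T + ((Fintype.card P : ℝ) * (δ * T) + C0), ?_⟩
      rintro y ⟨t, ht, rfl⟩
      have hsum : F t ≤ G t + ((Fintype.card P : ℝ) * (δ * T) + C0) := by
        rw [hF, hG, hC0]
        have := Finset.sum_le_sum (fun p (_ : p ∈ Finset.univ) => h1 p t ht.1 ht.2)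
        rw [Finset.sum_add_distrib, Finset.sum_add_distrib] at this
        simp only [Finset.sum_const, Finset.card_univ, nsmul_eq_mul] at this
        calc (∑ p, ∫ s in (0:ℝ)..t, if σ s = p then a p s else 0)
            ≤ _ := this
          _ = _ := by rw [add_assoc]
      have := hGbound T t ht.1 ht.2
      linarith
    have h0mem : F 0 ∈ F '' Set.Icc (0:ℝ) T := ⟨0, Set.mem_Icc.mpr ⟨le_rfl, hT0.le⟩, rfl⟩
    have hs0 : (0:ℝ) ≤ sSup (F '' Set.Icc 0 T) := by
      have := le_csSup hFbddA h0mem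
      rwa [hF0] at this
    exact mul_nonneg (by positivity) hs0
  have hLcob : IsCoboundedUnder (· ≤ ·) atTop
      (fun T : ℝ => (1 / T) * sSup (F '' Set.Icc 0 T)) :=
    isCoboundedUnder_le_of_eventually_le atTop hLlb
  have hRεbdd : IsBoundedUnder (· ≤ ·) atTop
      (fun T : ℝ => (1 / T) * sSup (G '' Set.Icc 0 T) + ε) :=
    isBoundedUnder_of_eventually_le (a := K + ε) (hRub.mono fun T hT => by linarith)
  have hL := limsup_le_limsup hmain hLcob hRεbdd
  rwa [limsup_add_const atTop (fun T : ℝ => (1 / T) * sSup (G '' Set.Icc 0 T)) ε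
    hRbdd hRcob] at hL
end

section
/- Weighted active-time average identity: let P be a finite set, σ a switching signal with active times τ_p(t), active rates ρ_p(t) = τ_p(t)/t, and strongly persistent modes P₊ := {p : limsup_{t→∞} ρ_p(t) > 0}. Then for any family of constants c_p ∈ ℝ (p ∈ P): limsup_{T→∞} (1/T) max_{t∈[0,T]} Σ_{p∈P} c_p τ_p(t) = limsup_{T→∞} (1/T) max_{t∈[0,T]} Σ_{p∈P₊} c_p τ_p(t) = max{ limsup_{t→∞} Σ_{p∈P₊} c_p ρ_p(t), 0 }. -/
open Filter MeasureTheory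

/-! For `g` with `|g t| ≤ K t` on `t ≥ 0`, write `L = limsup g(t)/t`. Then
`limsup_T (1/T) max_{[0,T]} g = max L 0`: the value `0` is forced by `g 0 = 0`, and once
`g t < (L + ε) t` for all `t ≥ t₀`, the times before `t₀` contribute only `K t₀ / T`.
Since `0 ≤ τ_p(t) ≤ t`, every weighted sum `Σ w_p τ_p` obeys such a bound. The rate
`τ_p(t)/t ∈ [0, 1]` of a mode outside `P₊` has nonpositive limsup and so tends to `0`; hence
dropping these modes changes the rate of the weighted sum by `o(1)` and leaves its limsup
unchanged. -/

open Topology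

noncomputable def runningSup (g : ℝ → ℝ) (T : ℝ) : ℝ :=
  sSup (g '' Set.Icc 0 T)

lemma limsup_add_of_tendsto_zero {ι : Type*} {f : Filter ι} [f.NeBot] {u v : ι → ℝ}
    (hu : IsBoundedUnder (· ≤ ·) f u) (hu' : IsBoundedUnder (· ≥ ·) f u)
    (hv : Tendsto v f (𝓝 0)) :
    limsup (fun i => u i + v i) f = limsup u f := by
  refine le_antisymm ?_ ?_
  · have h := limsup_add_le hu' hu hv.isBoundedUnder_ge.isCoboundedUnder_le hv.isBoundedUnder_le
    rwa [hv.limsup_eq, add_zero] at h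
  · have h := le_limsup_add hu hu'.isCoboundedUnder_le hv.isBoundedUnder_le hv.isBoundedUnder_ge
    rwa [hv.liminf_eq, add_zero] at h

section LinearBound

variable {g : ℝ → ℝ} {K : ℝ}

lemma nonneg_of_abs_le_mul (hg : ∀ t, 0 ≤ t → |g t| ≤ K * t) : 0 ≤ K := by
  simpa using (abs_nonneg _).trans (hg 1 zero_le_one)

lemma le_mul_of_abs_le_mul (hg : ∀ t, 0 ≤ t → |g t| ≤ K * t) {t T : ℝ}
    (ht : t ∈ Set.Icc 0 T) : g t ≤ K * T :=
  (le_abs_self _).trans <| (hg t ht.1).trans <|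
    mul_le_mul_of_nonneg_left ht.2 (nonneg_of_abs_le_mul hg)

lemma le_runningSup (hg : ∀ t, 0 ≤ t → |g t| ≤ K * t) {t T : ℝ} (ht : t ∈ Set.Icc 0 T) :
    g t ≤ runningSup g T :=
  le_csSup ⟨K * T, Set.forall_mem_image.2 fun _ hs => le_mul_of_abs_le_mul hg hs⟩
    (Set.mem_image_of_mem g ht)

lemma runningSup_le {T b : ℝ} (hT : 0 ≤ T) (h : ∀ t ∈ Set.Icc 0 T, g t ≤ b) :
    runningSup g T ≤ b :=
  csSup_le ((Set.nonempty_Icc.2 hT).image g) (Set.forall_mem_image.2 h)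

lemma eventually_abs_div_le (hg : ∀ t, 0 ≤ t → |g t| ≤ K * t) :
    ∀ᶠ t in atTop, |g t / t| ≤ K := by
  filter_upwards [eventually_gt_atTop 0] with t ht
  rw [abs_div, abs_of_pos ht, div_le_iff₀ ht]
  exact hg t ht.le

lemma isBoundedUnder_div_of_abs_le_mul (hg : ∀ t, 0 ≤ t → |g t| ≤ K * t) :
    IsBoundedUnder (· ≤ ·) atTop (fun t => g t / t) ∧
      IsBoundedUnder (· ≥ ·) atTop (fun t => g t / t) :=
  isBoundedUnder_le_abs.1 (isBoundedUnder_of_eventually_le (eventually_abs_div_le hg))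

lemma eventually_runningSup_div_mem_Icc (hg : ∀ t, 0 ≤ t → |g t| ≤ K * t) :
    ∀ᶠ T in atTop, (1 / T) * runningSup g T ∈ Set.Icc 0 K := by
  filter_upwards [eventually_gt_atTop 0] with T hT
  have hg0 : g 0 = 0 := abs_nonpos_iff.1 (by simpa using hg 0 le_rfl)
  have h0 : 0 ≤ runningSup g T := hg0 ▸ le_runningSup hg ⟨le_rfl, hT.le⟩
  have hK : runningSup g T ≤ K * T := runningSup_le hT.le fun _ => le_mul_of_abs_le_mul hg
  refine ⟨by positivity, ?_⟩
  calc (1 / T) * runningSup g T ≤ (1 / T) * (K * T) := by gcongr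
    _ = K := by field_simp

lemma isBoundedUnder_runningSup_div (hg : ∀ t, 0 ≤ t → |g t| ≤ K * t) :
    IsBoundedUnder (· ≤ ·) atTop (fun T => (1 / T) * runningSup g T) ∧
      IsBoundedUnder (· ≥ ·) atTop (fun T => (1 / T) * runningSup g T) :=
  ⟨isBoundedUnder_of_eventually_le ((eventually_runningSup_div_mem_Icc hg).mono fun _ h => h.2),
    isBoundedUnder_of_eventually_ge ((eventually_runningSup_div_mem_Icc hg).mono fun _ h => h.1)⟩

lemma le_limsup_runningSup_div (hg : ∀ t, 0 ≤ t → |g t| ≤ K * t) :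
    max (limsup (fun t => g t / t) atTop) 0 ≤
      limsup (fun T => (1 / T) * runningSup g T) atTop := by
  obtain ⟨hV, -⟩ := isBoundedUnder_runningSup_div hg
  refine max_le
    (limsup_le_limsup ?_ (isBoundedUnder_div_of_abs_le_mul hg).2.isCoboundedUnder_le hV) ?_
  · filter_upwards [eventually_gt_atTop 0] with T hT
    rw [div_eq_inv_mul, ← one_div]
    exact mul_le_mul_of_nonneg_left (le_runningSup hg ⟨hT.le, le_rfl⟩) (by positivity)
  · exact le_limsup_of_frequently_le
      ((eventually_runningSup_div_mem_Icc hg).mono fun _ h => h.1).frequently hV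

lemma limsup_runningSup_div_le (hg : ∀ t, 0 ≤ t → |g t| ≤ K * t) {C : ℝ}
    (hLC : limsup (fun t => g t / t) atTop < C) (hC : 0 ≤ C) :
    limsup (fun T => (1 / T) * runningSup g T) atTop ≤ C := by
  obtain ⟨t₁, ht₁⟩ := eventually_atTop.1
    ((eventually_lt_of_limsup_lt hLC (isBoundedUnder_div_of_abs_le_mul hg).1).and
      (eventually_gt_atTop 0))
  have hKt₁ : 0 ≤ K * t₁ := mul_nonneg (nonneg_of_abs_le_mul hg) (ht₁ t₁ le_rfl).2.le
  have hbound : ∀ᶠ T in atTop, (1 / T) * runningSup g T ≤ C + K * t₁ * (1 / T) := by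
    filter_upwards [eventually_ge_atTop t₁, eventually_gt_atTop 0] with T hT hT0
    have hsup : runningSup g T ≤ C * T + K * t₁ := by
      refine runningSup_le hT0.le fun t ht => ?_
      rcases le_total t t₁ with htt₁ | htt₁
      · linarith [le_mul_of_abs_le_mul hg ⟨ht.1, htt₁⟩, mul_nonneg hC hT0.le]
      · obtain ⟨hlt, hpos⟩ := ht₁ t htt₁
        rw [div_lt_iff₀ hpos] at hlt
        linarith [mul_le_mul_of_nonneg_left ht.2 hC]
    calc (1 / T) * runningSup g T ≤ (1 / T) * (C * T + K * t₁) := by gcongr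
      _ = C + K * t₁ * (1 / T) := by field_simp
  have hlim : Tendsto (fun T : ℝ => C + K * t₁ * (1 / T)) atTop (𝓝 C) := by
    simpa using tendsto_const_nhds.add (tendsto_inv_atTop_zero.const_mul (K * t₁))
  exact (limsup_le_limsup hbound (isBoundedUnder_runningSup_div hg).2.isCoboundedUnder_le
    hlim.isBoundedUnder_le).trans_eq hlim.limsup_eq

theorem limsup_runningSup_div (hg : ∀ t, 0 ≤ t → |g t| ≤ K * t) :
    limsup (fun T => (1 / T) * runningSup g T) atTop =
      max (limsup (fun t => g t / t) atTop) 0 :=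
  le_antisymm (le_of_forall_gt_imp_ge_of_dense fun _ hC =>
      limsup_runningSup_div_le hg (max_lt_iff.1 hC).1 (max_lt_iff.1 hC).2.le)
    (le_limsup_runningSup_div hg)

end LinearBound

section ActiveTime

variable {P : Type*} [DecidableEq P] (σ : ℝ → P)

lemma activeTime_nonneg (p : P) {t : ℝ} (ht : 0 ≤ t) : 0 ≤ activeTime σ p t :=
  intervalIntegral.integral_nonneg ht fun _ _ => by split_ifs <;> norm_num

lemma activeTime_le (p : P) {t : ℝ} (ht : 0 ≤ t) : activeTime σ p t ≤ t := by
  have h := intervalIntegral.norm_integral_le_of_norm_le_const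
    (f := fun s => if σ s = p then (1 : ℝ) else 0) (a := 0) (b := t) (C := 1)
    fun _ _ => by split_ifs <;> norm_num
  rw [sub_zero, abs_of_nonneg ht, one_mul] at h
  exact (le_abs_self _).trans h

lemma abs_sum_mul_activeTime_le [Fintype P] (w : P → ℝ) (t : ℝ) (ht : 0 ≤ t) :
    |∑ p, w p * activeTime σ p t| ≤ (∑ p, |w p|) * t := by
  rw [Finset.sum_mul]
  refine (Finset.abs_sum_le_sum_abs _ _).trans (Finset.sum_le_sum fun p _ => ?_)
  rw [abs_mul, abs_of_nonneg (activeTime_nonneg σ p ht)]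
  exact mul_le_mul_of_nonneg_left (activeTime_le σ p ht) (abs_nonneg _)

lemma tendsto_activeTime_div_of_limsup_nonpos {p : P}
    (hp : limsup (fun u => activeTime σ p u / u) atTop ≤ 0) :
    Tendsto (fun u => activeTime σ p u / u) atTop (𝓝 0) := by
  have hρ : ∀ᶠ u in atTop, activeTime σ p u / u ∈ Set.Icc 0 1 := by
    filter_upwards [eventually_gt_atTop 0] with u hu
    exact ⟨by positivity [activeTime_nonneg σ p hu.le],
      (div_le_one hu).2 (activeTime_le σ p hu.le)⟩
  have hle := isBoundedUnder_of_eventually_le (hρ.mono fun _ h => h.2)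
  refine tendsto_of_le_liminf_of_limsup_le
    (le_liminf_of_le hle.isCoboundedUnder_ge (hρ.mono fun _ h => h.1)) hp hle
    (isBoundedUnder_of_eventually_ge (hρ.mono fun _ h => h.1))

lemma tendsto_sum_mul_activeTime_div_zero [Fintype P] {w : P → ℝ}
    (hw : ∀ p, 0 < limsup (fun u => activeTime σ p u / u) atTop → w p = 0) :
    Tendsto (fun t => (∑ p, w p * activeTime σ p t) / t) atTop (𝓝 0) := by
  have hterm : ∀ p, Tendsto (fun t => w p * (activeTime σ p t / t)) atTop (𝓝 0) := by
    intro p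
    rcases le_or_gt (limsup (fun u => activeTime σ p u / u) atTop) 0 with hp | hp
    · simpa using (tendsto_activeTime_div_of_limsup_nonpos σ hp).const_mul (w p)
    · simp [hw p hp]
  simp_rw [Finset.sum_div, mul_div_assoc]
  simpa using tendsto_finsetSum Finset.univ fun p _ => hterm p

end ActiveTime

open Classical in
theorem weighted_activeTime_average_identity_general {P : Type*} [Fintype P]
    [DecidableEq P] (σ : ℝ → P) (c : P → ℝ) :
    limsup (fun T : ℝ => (1 / T) *
        sSup ((fun t => ∑ p, c p * activeTime σ p t) '' Set.Icc 0 T)) atTop =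
      limsup (fun T : ℝ => (1 / T) *
        sSup ((fun t => ∑ p,
          if 0 < limsup (fun u => activeTime σ p u / u) atTop then
            c p * activeTime σ p t
          else 0) '' Set.Icc 0 T)) atTop ∧
    limsup (fun T : ℝ => (1 / T) *
        sSup ((fun t => ∑ p,
          if 0 < limsup (fun u => activeTime σ p u / u) atTop then
            c p * activeTime σ p t
          else 0) '' Set.Icc 0 T)) atTop =
      max (limsup (fun t : ℝ => ∑ p,
        if 0 < limsup (fun u => activeTime σ p u / u) atTop then
          c p * (activeTime σ p t / t)
        else 0) atTop) 0 := by
  set cPers : P → ℝ := fun p =>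
    if 0 < limsup (fun u => activeTime σ p u / u) atTop then c p else 0
  have hsum : (fun t => ∑ p, if 0 < limsup (fun u => activeTime σ p u / u) atTop then
      c p * activeTime σ p t else 0) = fun t => ∑ p, cPers p * activeTime σ p t := by
    simp only [cPers, ite_mul, zero_mul]
  have hrate : (fun t => ∑ p, if 0 < limsup (fun u => activeTime σ p u / u) atTop then
      c p * (activeTime σ p t / t) else 0) =
        fun t => (∑ p, cPers p * activeTime σ p t) / t := by
    simp only [cPers, ite_mul, zero_mul, Finset.sum_div, mul_div_assoc, ite_div, zero_div]
  have hsplit : (fun t => (∑ p, c p * activeTime σ p t) / t) = fun t =>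
      (∑ p, cPers p * activeTime σ p t) / t +
        (∑ p, (c p - cPers p) * activeTime σ p t) / t := by
    simp only [← add_div, ← Finset.sum_add_distrib, ← add_mul, add_sub_cancel]
  have hdrop := tendsto_sum_mul_activeTime_div_zero σ (w := fun p => c p - cPers p)
    fun p hp => by simp [cPers, hp]
  obtain ⟨hG, hG'⟩ := isBoundedUnder_div_of_abs_le_mul (abs_sum_mul_activeTime_le σ cPers)
  refine ⟨?_, ?_⟩
  · rw [hsum]
    calc _ = max (limsup (fun t => (∑ p, c p * activeTime σ p t) / t) atTop) 0 :=
          limsup_runningSup_div (abs_sum_mul_activeTime_le σ c)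
      _ = max (limsup (fun t => (∑ p, cPers p * activeTime σ p t) / t) atTop) 0 := by
          rw [hsplit, limsup_add_of_tendsto_zero hG hG' hdrop]
      _ = _ := (limsup_runningSup_div (abs_sum_mul_activeTime_le σ cPers)).symm
  · rw [hsum, hrate]
    exact limsup_runningSup_div (abs_sum_mul_activeTime_le σ cPers)

open Classical in
theorem weighted_activeTime_average_identity {P : Type*} [Fintype P]
    [DecidableEq P] (σ : ℝ → P) (hσ : PiecewiseConstantOn σ) (c : P → ℝ) :
    limsup (fun T : ℝ => (1 / T) *
        sSup ((fun t => ∑ p, c p * activeTime σ p t) '' Set.Icc 0 T)) atTop =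
      limsup (fun T : ℝ => (1 / T) *
        sSup ((fun t => ∑ p,
          if 0 < limsup (fun u => activeTime σ p u / u) atTop then
            c p * activeTime σ p t
          else 0) '' Set.Icc 0 T)) atTop ∧
    limsup (fun T : ℝ => (1 / T) *
        sSup ((fun t => ∑ p,
          if 0 < limsup (fun u => activeTime σ p u / u) atTop then
            c p * activeTime σ p t
          else 0) '' Set.Icc 0 T)) atTop =
      max (limsup (fun t : ℝ => ∑ p,
        if 0 < limsup (fun u => activeTime σ p u / u) atTop then
          c p * (activeTime σ p t / t)
        else 0) atTop) 0 :=
  weighted_activeTime_average_identity_general σ c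
end
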